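/- arXiv:1406.3130 — 9 statements merged into one kernel-verified Lean document; each statement's English description precedes it below -/
import Mathlib

section
/- Under the stated hypotheses, for every a ≥ 0 and every x ∈ ℝ, 𝒲_a(x) = W_p(x) + q ∫_a^x W_{p+q}(x − z) W_p(z) dz; in particular 𝒲_a(x) = W_p(x) whenever x ≤ a. (This is the identity (3.2) of the paper relating the two representations of 𝓦_a^{(p,q)}.) -/
/-!
On Laplace transforms, `1/(ψ - p - q) - 1/(ψ - p) = q/((ψ - p)(ψ - p - q))` says that
`F = W^{(p+q)} - W^{(p)} - q W^{(p)} ⋆ W^{(p+q)}` has vanishing Laplace transform on `(φ', ∞)`.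
By Lerch's theorem (substitute `t = e^{-x}` and approximate by polynomials on `[0, 1]`) `F`
vanishes a.e. on `(0, ∞)`; it is continuous on `[0, ∞)`, hence vanishes there, and trivially on
`(-∞, 0)`. Splitting the convolution integral `∫_0^x` at `a` gives the identity, and for `x ≤ a`
the integral over `[a, x]` vanishes since `W^{(p+q)}` does on `(-∞, 0)`.
-/

open MeasureTheory Set Filter Topology Real
open scoped Convolution

section SupportedOnIci

variable {f : ℝ → ℝ}

lemma monotone_of_monotoneOn_Ici_of_neg (hf : MonotoneOn f (Ici 0)) (h0 : 0 ≤ f 0)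
    (hneg : ∀ x, x < 0 → f x = 0) : Monotone f := by
  intro x y hxy
  rcases lt_or_ge x 0 with hx | hx
  · rcases lt_or_ge y 0 with hy | hy
    · rw [hneg x hx, hneg y hy]
    · rw [hneg x hx]
      exact h0.trans (hf self_mem_Ici hy hy)
  · exact hf hx (hx.trans hxy) hxy

lemma nonneg_of_monotone_of_neg (hf : Monotone f) (hneg : ∀ x, x < 0 → f x = 0) (x : ℝ) :
    0 ≤ f x :=
  (hneg (min x (-1)) (by simp)).symm.le.trans (hf (min_le_left x (-1)))

lemma continuousAt_of_continuousOn_Ici_of_neg (hf : ContinuousOn f (Ici 0))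
    (hneg : ∀ x, x < 0 → f x = 0) {y : ℝ} (hy : y ≠ 0) : ContinuousAt f y := by
  rcases hy.lt_or_gt with hy | hy
  · exact continuousAt_const.congr (eventually_lt_nhds hy |>.mono fun x hx => (hneg x hx).symm)
  · exact hf.continuousAt (Ici_mem_nhds hy)

lemma indicator_Ici_eq_self_of_neg (hneg : ∀ x, x < 0 → f x = 0) : (Ici 0).indicator f = f :=
  indicator_eq_self.2 fun x hx => not_lt.1 fun h => hx (hneg x h)

lemma integrableOn_Ioi_iff_integrable_of_neg (hneg : ∀ x, x < 0 → f x = 0) :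
    IntegrableOn f (Ioi 0) ↔ Integrable f := by
  rw [← integrableOn_Ici_iff_integrableOn_Ioi, ← integrable_indicator_iff measurableSet_Ici,
    indicator_Ici_eq_self_of_neg hneg]

lemma setIntegral_Ioi_eq_integral_of_neg (hneg : ∀ x, x < 0 → f x = 0) :
    ∫ x in Ioi 0, f x = ∫ x, f x := by
  rw [← integral_Ici_eq_integral_Ioi, ← integral_indicator measurableSet_Ici,
    indicator_Ici_eq_self_of_neg hneg]

end SupportedOnIci

section Lerch

variable {g : ℝ → ℝ}

lemma mapsTo_exp_neg_Ioi_Icc : MapsTo (fun x => exp (-x)) (Ioi 0) (Icc 0 1) := fun _ hx =>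
  ⟨(exp_pos _).le, exp_le_one_iff.2 (neg_nonpos.2 (le_of_lt hx))⟩

lemma integrableOn_comp_exp_neg_mul {φ : ℝ → ℝ} (hφ : ContinuousOn φ (Icc 0 1))
    (hg : IntegrableOn g (Ioi 0)) :
    IntegrableOn (fun x => φ (exp (-x)) * g x) (Ioi 0) := by
  obtain ⟨C, hC⟩ := isCompact_Icc.exists_bound_of_continuousOn hφ
  refine hg.bdd_mul (c := C) ?_ ?_
  · exact (hφ.comp (by fun_prop) mapsTo_exp_neg_Ioi_Icc).aestronglyMeasurable measurableSet_Ioi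
  · exact ae_restrict_of_forall_mem measurableSet_Ioi fun _ hx => hC _ (mapsTo_exp_neg_Ioi_Icc hx)

lemma integral_comp_exp_neg_mul_eq_zero_of_moments (hg : IntegrableOn g (Ioi 0))
    (hmom : ∀ n : ℕ, ∫ x in Ioi 0, exp (-x) ^ n * g x = 0)
    {φ : ℝ → ℝ} (hφ : ContinuousOn φ (Icc 0 1)) :
    ∫ x in Ioi 0, φ (exp (-x)) * g x = 0 := by
  have hpoly : ∀ P : Polynomial ℝ, ∫ x in Ioi 0, P.eval (exp (-x)) * g x = 0 := by
    intro P
    simp_rw [Polynomial.eval_eq_sum_range, Finset.sum_mul]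
    rw [integral_finsetSum]
    · refine Finset.sum_eq_zero fun n _ => ?_
      simp_rw [mul_assoc]
      rw [integral_const_mul, hmom n, mul_zero]
    · exact fun n _ =>
        integrableOn_comp_exp_neg_mul (φ := fun t => P.coeff n * t ^ n) (by fun_prop) hg
  set M := ∫ x in Ioi 0, |g x|
  have hM : 0 ≤ M := integral_nonneg fun x => abs_nonneg _
  refine eq_of_forall_dist_le fun ε hε => ?_
  obtain ⟨P, hP⟩ := exists_polynomial_near_of_continuousOn 0 1 φ hφ (ε / (M + 1)) (by positivity)
  have hφP : ∫ x in Ioi 0, φ (exp (-x)) * g x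
      = ∫ x in Ioi 0, (φ (exp (-x)) - P.eval (exp (-x))) * g x := by
    simp_rw [sub_mul]
    rw [integral_sub (integrableOn_comp_exp_neg_mul hφ hg)
      (integrableOn_comp_exp_neg_mul P.continuous.continuousOn hg), hpoly, sub_zero]
  calc dist (∫ x in Ioi 0, φ (exp (-x)) * g x) 0
      = |∫ x in Ioi 0, (φ (exp (-x)) - P.eval (exp (-x))) * g x| := by
        rw [Real.dist_0_eq_abs, hφP]
    _ ≤ ∫ x in Ioi 0, ε / (M + 1) * |g x| := by
        refine abs_integral_le_integral_abs.trans
          (setIntegral_mono_on ?_ ?_ measurableSet_Ioi ?_)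
        · exact (integrableOn_comp_exp_neg_mul (hφ.sub P.continuous.continuousOn) hg).abs
        · exact hg.abs.const_mul _
        · intro x hx
          rw [abs_mul, abs_sub_comm]
          exact mul_le_mul_of_nonneg_right (hP _ (mapsTo_exp_neg_Ioi_Icc hx)).le (abs_nonneg _)
    _ = ε / (M + 1) * M := integral_const_mul _ _
    _ ≤ ε := by
        rw [div_mul_eq_mul_div, div_le_iff₀ (by positivity)]
        nlinarith

lemma continuous_comp_neg_log_of_tsupport_subset_Ioi {ρ : ℝ → ℝ} (hρ : Continuous ρ)
    (hρc : HasCompactSupport ρ) (hρU : tsupport ρ ⊆ Ioi 0) :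
    Continuous fun t => ρ (-log t) := by
  rw [continuous_iff_continuousAt]
  intro t
  rcases eq_or_ne t 0 with rfl | ht
  -- `log 0 = 0`, and `ρ 0 = 0`; as `t → 0`, `-log t → ∞`, where `ρ` vanishes.
  · rw [← continuousWithinAt_compl_self, ContinuousWithinAt, log_zero, neg_zero,
      image_eq_zero_of_notMem_tsupport fun h => lt_irrefl (0 : ℝ) (hρU h)]
    exact (hρc.is_zero_at_infty.mono_left atTop_le_cocompact).comp
      (tendsto_neg_atBot_atTop.comp tendsto_log_nhdsNE_zero)
  · exact hρ.continuousAt.comp (continuousAt_log ht).neg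

lemma ae_eq_zero_of_forall_integral_comp_exp_neg_mul_eq_zero (hg : IntegrableOn g (Ioi 0))
    (h : ∀ φ : ℝ → ℝ, ContinuousOn φ (Icc 0 1) → ∫ x in Ioi 0, φ (exp (-x)) * g x = 0) :
    ∀ᵐ x ∂volume.restrict (Ioi 0), g x = 0 := by
  refine (ae_restrict_iff' measurableSet_Ioi).2 <|
    isOpen_Ioi.ae_eq_zero_of_integral_contDiff_smul_eq_zero hg.locallyIntegrableOn
      fun ρ hρ hρc hρU => ?_
  -- On `(0, ∞)` the test function `ρ` is `φ (exp (-x))` with `φ = ρ ∘ (-log)`.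
  rw [← setIntegral_eq_integral_of_forall_compl_eq_zero fun x hx => by
    rw [image_eq_zero_of_notMem_tsupport fun h => hx (hρU h), zero_smul]]
  simpa only [log_exp, neg_neg, smul_eq_mul] using
    h _ (continuous_comp_neg_log_of_tsupport_subset_Ioi hρ.continuous hρc hρU).continuousOn

theorem ae_eq_zero_of_laplace_eq_zero {f : ℝ → ℝ} {l₀ : ℝ}
    (hint : ∀ l, l₀ < l → IntegrableOn (fun x => exp (-(l * x)) * f x) (Ioi 0))
    (hlap : ∀ l, l₀ < l → ∫ x in Ioi 0, exp (-(l * x)) * f x = 0) :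
    ∀ᵐ x ∂volume.restrict (Ioi 0), f x = 0 := by
  have hl₀ : l₀ < l₀ + 1 := lt_add_one l₀
  have hmom (n : ℕ) : ∫ x in Ioi 0, exp (-x) ^ n * (exp (-((l₀ + 1) * x)) * f x) = 0 := by
    refine Eq.trans (integral_congr_ae (ae_of_all _ fun x => ?_))
      (hlap (l₀ + 1 + n) (by linarith [n.cast_nonneg (α := ℝ)]))
    dsimp only
    rw [← mul_assoc, ← exp_nat_mul, ← exp_add]
    ring_nf
  filter_upwards [ae_eq_zero_of_forall_integral_comp_exp_neg_mul_eq_zero (hint _ hl₀)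
    fun φ hφ => integral_comp_exp_neg_mul_eq_zero_of_moments (hint _ hl₀) hmom hφ] with x hx
  exact (mul_eq_zero.1 hx).resolve_left (exp_ne_zero _)

end Lerch

section Convolution

variable {f g : ℝ → ℝ}

lemma intervalIntegral_comp_sub_mul_eq_zero_of_le (hg : ∀ x, x < 0 → g x = 0) {a x : ℝ}
    (hxa : x ≤ a) : ∫ z in a..x, g (x - z) * f z = 0 := by
  rw [intervalIntegral.integral_symm, intervalIntegral.integral_of_le hxa, neg_eq_zero]
  refine setIntegral_eq_zero_of_forall_eq_zero fun z hz => ?_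
  rw [hg _ (by linarith [hz.1]), zero_mul]

lemma convolution_eq_intervalIntegral (hf : ∀ x, x < 0 → f x = 0) (hg : ∀ x, x < 0 → g x = 0)
    (x : ℝ) : (f ⋆ g) x = ∫ z in (0 : ℝ)..x, g (x - z) * f z := by
  have hsupp : ∀ t ∉ Icc 0 x, f t • g (x - t) = 0 := fun t ht => by
    rcases not_and_or.1 ht with ht | ht
    · rw [hf t (not_le.1 ht), zero_smul]
    · rw [hg _ (by linarith [not_le.1 ht]), smul_zero]
  rw [convolution_lsmul, ← setIntegral_eq_integral_of_forall_compl_eq_zero hsupp]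
  rcases lt_or_ge x 0 with hx | hx
  · rw [Icc_eq_empty (not_le.2 hx), Measure.restrict_empty, integral_zero_measure,
      intervalIntegral_comp_sub_mul_eq_zero_of_le hg hx.le]
  · rw [integral_Icc_eq_integral_Ioc, intervalIntegral.integral_of_le hx]
    simp_rw [smul_eq_mul, mul_comm]

lemma convolution_eq_zero_of_nonpos (hf : ∀ x, x < 0 → f x = 0) (hg : ∀ x, x < 0 → g x = 0)
    {x : ℝ} (hx : x ≤ 0) : (f ⋆ g) x = 0 := by
  rw [convolution_eq_intervalIntegral hf hg, intervalIntegral_comp_sub_mul_eq_zero_of_le hg hx]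

lemma exp_neg_mul_convolution (l : ℝ) (f g : ℝ → ℝ) (x : ℝ) :
    exp (-(l * x)) * (f ⋆ g) x
      = ((fun t => exp (-(l * t)) * f t) ⋆ fun t => exp (-(l * t)) * g t) x := by
  simp only [convolution_lsmul, smul_eq_mul, ← integral_const_mul]
  congr 1 with t
  rw [show -(l * x) = -(l * t) + -(l * (x - t)) by ring, exp_add]
  ring

lemma laplace_convolution {l : ℝ} (hf : ∀ x, x < 0 → f x = 0) (hg : ∀ x, x < 0 → g x = 0)
    (hfi : IntegrableOn (fun x => exp (-(l * x)) * f x) (Ioi 0))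
    (hgi : IntegrableOn (fun x => exp (-(l * x)) * g x) (Ioi 0)) :
    IntegrableOn (fun x => exp (-(l * x)) * (f ⋆ g) x) (Ioi 0) ∧
      ∫ x in Ioi 0, exp (-(l * x)) * (f ⋆ g) x
        = (∫ x in Ioi 0, exp (-(l * x)) * f x) * ∫ x in Ioi 0, exp (-(l * x)) * g x := by
  have hweight {h : ℝ → ℝ} (hh : ∀ x, x < 0 → h x = 0) :
      ∀ x, x < 0 → exp (-(l * x)) * h x = 0 := fun x hx => by rw [hh x hx, mul_zero]
  have hfg : ∀ x, x < 0 → (f ⋆ g) x = 0 := fun x hx =>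
    convolution_eq_zero_of_nonpos hf hg hx.le
  rw [integrableOn_Ioi_iff_integrable_of_neg (hweight hf)] at hfi
  rw [integrableOn_Ioi_iff_integrable_of_neg (hweight hg)] at hgi
  rw [integrableOn_Ioi_iff_integrable_of_neg (hweight hfg), setIntegral_Ioi_eq_integral_of_neg
    (hweight hfg), setIntegral_Ioi_eq_integral_of_neg (hweight hf),
    setIntegral_Ioi_eq_integral_of_neg (hweight hg), funext (exp_neg_mul_convolution l f g)]
  exact ⟨hfi.integrable_convolution _ hgi, integral_convolution _ hfi hgi⟩

lemma intervalIntegrable_comp_sub_mul (hf : Monotone f) (hg : Monotone g)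
    (hg0 : ∀ x, x < 0 → g x = 0) (x a b : ℝ) :
    IntervalIntegrable (fun z => g (x - z) * f z) volume a b := by
  refine intervalIntegrable_iff.2 <| (intervalIntegrable_iff.1 (hf.intervalIntegrable)).bdd_mul
    (c := g (x - min a b)) (hg.measurable.comp (by fun_prop)).aestronglyMeasurable
    (ae_restrict_of_forall_mem measurableSet_uIoc fun z hz => ?_)
  rw [Real.norm_of_nonneg (nonneg_of_monotone_of_neg hg hg0 _)]
  exact hg (by linarith [hz.1])

lemma continuous_convolution_of_monotone (hf : Monotone f) (hf0 : ∀ x, x < 0 → f x = 0)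
    (hg : Monotone g) (hg0 : ∀ x, x < 0 → g x = 0) (hgc : ContinuousOn g (Ici 0)) :
    Continuous (f ⋆ g) := by
  have hconv : (f ⋆ g) = fun x => ∫ t, f t * g (x - t) := by
    ext x
    simp only [convolution_lsmul, smul_eq_mul]
  rw [hconv, continuous_iff_continuousAt]
  intro x₀
  have hfn := nonneg_of_monotone_of_neg hf hf0
  have hgn := nonneg_of_monotone_of_neg hg hg0
  refine continuousAt_of_dominated
    (bound := (Icc 0 (x₀ + 1)).indicator fun _ => f (x₀ + 1) * g (x₀ + 1))
    (Eventually.of_forall fun x =>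
      (hf.measurable.mul (hg.measurable.comp (by fun_prop))).aestronglyMeasurable) ?_
    ((integrable_indicator_iff measurableSet_Icc).2 (integrableOn_const measure_Icc_lt_top.ne)) ?_
  · filter_upwards [eventually_lt_nhds (lt_add_one x₀)] with x hx
    refine ae_of_all _ fun t => ?_
    by_cases ht : t ∈ Icc 0 (x₀ + 1)
    · rw [indicator_of_mem ht, Real.norm_of_nonneg (mul_nonneg (hfn t) (hgn _))]
      exact mul_le_mul (hf ht.2) (hg (by linarith [ht.1])) (hgn _) (hfn _)
    · rw [indicator_of_notMem ht]
      rcases not_and_or.1 ht with ht | ht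
      · simp [hf0 t (not_le.1 ht)]
      · simp [hg0 (x - t) (by linarith [not_le.1 ht])]
  -- `g` can only jump at `0`, so `x ↦ g (x - t)` is continuous at `x₀` unless `t = x₀`.
  · filter_upwards [Measure.ae_ne volume x₀] with t ht
    exact continuousAt_const.mul <| (continuousAt_of_continuousOn_Ici_of_neg hgc hg0
      (sub_ne_zero.2 (Ne.symm ht))).comp (f := fun x => x - t) (by fun_prop)

end Convolution

theorem eq_add_mul_convolution_of_laplace {W U : ℝ → ℝ} {c l₀ : ℝ}
    (hW : Monotone W) (hW0 : ∀ x, x < 0 → W x = 0) (hWc : ContinuousOn W (Ici 0))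
    (hU : Monotone U) (hU0 : ∀ x, x < 0 → U x = 0) (hUc : ContinuousOn U (Ici 0))
    (hWi : ∀ l, l₀ < l → IntegrableOn (fun x => exp (-(l * x)) * W x) (Ioi 0))
    (hUi : ∀ l, l₀ < l → IntegrableOn (fun x => exp (-(l * x)) * U x) (Ioi 0))
    (hlap : ∀ l, l₀ < l → ∫ x in Ioi 0, exp (-(l * x)) * U x
      = (∫ x in Ioi 0, exp (-(l * x)) * W x)
        + c * ((∫ x in Ioi 0, exp (-(l * x)) * W x) * ∫ x in Ioi 0, exp (-(l * x)) * U x)) :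
    ∀ x, U x = W x + c * (W ⋆ U) x := by
  set F : ℝ → ℝ := fun x => U x - W x - c * (W ⋆ U) x
  have hF_laplace (l : ℝ) (hl : l₀ < l) :
      IntegrableOn (fun x => exp (-(l * x)) * F x) (Ioi 0) ∧
        ∫ x in Ioi 0, exp (-(l * x)) * F x = 0 := by
    obtain ⟨hconv_int, hconv⟩ := laplace_convolution hW0 hU0 (hWi l hl) (hUi l hl)
    have hsplit : (fun x => exp (-(l * x)) * F x) = fun x =>
        exp (-(l * x)) * U x - exp (-(l * x)) * W x - c * (exp (-(l * x)) * (W ⋆ U) x) := by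
      ext x
      ring
    have hdiff : IntegrableOn (fun x => exp (-(l * x)) * U x - exp (-(l * x)) * W x) (Ioi 0) :=
      (hUi l hl).sub (hWi l hl)
    rw [hsplit, integral_sub (g := fun x => c * (exp (-(l * x)) * (W ⋆ U) x)) hdiff
      (hconv_int.const_mul c), integral_sub (hUi l hl) (hWi l hl),
      integral_const_mul, hconv]
    exact ⟨hdiff.sub (hconv_int.const_mul c), by linear_combination hlap l hl⟩
  have hF_ae : F =ᵐ[volume.restrict (Ici 0)] 0 := by
    rw [← Measure.restrict_congr_set Ioi_ae_eq_Ici]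
    exact ae_eq_zero_of_laplace_eq_zero (fun l hl => (hF_laplace l hl).1)
      fun l hl => (hF_laplace l hl).2
  have hF_cont : ContinuousOn F (Ici 0) := (hUc.sub hWc).sub
    ((continuous_convolution_of_monotone hW hW0 hU hU0 hUc).continuousOn.const_smul c)
  have hF : EqOn F 0 (Ici 0) := Measure.eqOn_of_ae_eq hF_ae hF_cont continuousOn_const
    (by rw [interior_Ici, closure_Ioi])
  intro x
  rcases lt_or_ge x 0 with hx | hx
  · rw [hU0 x hx, hW0 x hx, convolution_eq_zero_of_nonpos hW0 hU0 hx.le]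
    ring
  · have := hF hx
    simp only [F, Pi.zero_apply] at this
    linarith

theorem W_script_two_representations_general
    (p q φ' : ℝ) (hq : 0 ≤ q)
    (ψ Wp Wpq : ℝ → ℝ)
    (hψ : ∀ l, φ' < l → p + q < ψ l)
    (hWp_cont : ContinuousOn Wp (Set.Ici 0))
    (hWp_nonneg : ∀ x, 0 ≤ x → 0 ≤ Wp x)
    (hWp_mono : MonotoneOn Wp (Set.Ici 0))
    (hWp_neg : ∀ x, x < 0 → Wp x = 0)
    (hWpq_cont : ContinuousOn Wpq (Set.Ici 0))
    (hWpq_nonneg : ∀ x, 0 ≤ x → 0 ≤ Wpq x)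
    (hWpq_mono : MonotoneOn Wpq (Set.Ici 0))
    (hWpq_neg : ∀ x, x < 0 → Wpq x = 0)
    (hWp_int : ∀ l, φ' < l →
      MeasureTheory.IntegrableOn (fun x => Real.exp (-(l * x)) * Wp x) (Set.Ioi 0))
    (hWp_lap : ∀ l, φ' < l →
      ∫ x in Set.Ioi (0:ℝ), Real.exp (-(l * x)) * Wp x = 1 / (ψ l - p))
    (hWpq_int : ∀ l, φ' < l →
      MeasureTheory.IntegrableOn (fun x => Real.exp (-(l * x)) * Wpq x) (Set.Ioi 0))
    (hWpq_lap : ∀ l, φ' < l →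
      ∫ x in Set.Ioi (0:ℝ), Real.exp (-(l * x)) * Wpq x = 1 / (ψ l - (p + q))) :
    ∀ a, 0 ≤ a → ∀ x : ℝ,
      (Wpq x - q * ∫ z in (0:ℝ)..a, Wpq (x - z) * Wp z
          = Wp x + q * ∫ z in a..x, Wpq (x - z) * Wp z) ∧
      (x ≤ a → Wpq x - q * ∫ z in (0:ℝ)..a, Wpq (x - z) * Wp z = Wp x) := by
  have hWp := monotone_of_monotoneOn_Ici_of_neg hWp_mono (hWp_nonneg 0 le_rfl) hWp_neg
  have hWpq := monotone_of_monotoneOn_Ici_of_neg hWpq_mono (hWpq_nonneg 0 le_rfl) hWpq_neg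
  have hresolvent := eq_add_mul_convolution_of_laplace (c := q) hWp hWp_neg hWp_cont hWpq
    hWpq_neg hWpq_cont hWp_int hWpq_int fun l hl => by
      have hA : ψ l - (p + q) ≠ 0 := by linarith [hψ l hl]
      have hB : ψ l - p ≠ 0 := by linarith [hψ l hl, hq]
      rw [hWp_lap l hl, hWpq_lap l hl]
      field_simp
      ring
  intro a _ x
  have hsplit : (Wp ⋆ Wpq) x
      = (∫ z in (0:ℝ)..a, Wpq (x - z) * Wp z) + ∫ z in a..x, Wpq (x - z) * Wp z := by
    rw [convolution_eq_intervalIntegral hWp_neg hWpq_neg,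
      intervalIntegral.integral_add_adjacent_intervals] <;>
      exact intervalIntegrable_comp_sub_mul hWp hWpq hWpq_neg x _ _
  have hmain : Wpq x - q * ∫ z in (0:ℝ)..a, Wpq (x - z) * Wp z
      = Wp x + q * ∫ z in a..x, Wpq (x - z) * Wp z := by
    rw [hresolvent x, hsplit]
    ring
  refine ⟨hmain, fun hxa => ?_⟩
  rw [hmain, intervalIntegral_comp_sub_mul_eq_zero_of_le hWpq_neg hxa, mul_zero, add_zero]

/-- Identity (3.2) of the paper: the two representations of 𝓦_a^{(p,q)},
and the fact that 𝓦_a^{(p,q)}(x) = W^{(p)}(x) for x ≤ a. -/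
theorem W_script_two_representations
    (p q φ φ' : ℝ) (hp : 0 ≤ p) (hq : 0 ≤ q) (hφφ' : φ ≤ φ')
    (ψ Wp Wpq : ℝ → ℝ)
    (hψ : ∀ l, φ' < l → p + q < ψ l)
    (hWp_cont : ContinuousOn Wp (Set.Ici 0))
    (hWp_nonneg : ∀ x, 0 ≤ x → 0 ≤ Wp x)
    (hWp_mono : MonotoneOn Wp (Set.Ici 0))
    (hWp_neg : ∀ x, x < 0 → Wp x = 0)
    (hWpq_cont : ContinuousOn Wpq (Set.Ici 0))
    (hWpq_nonneg : ∀ x, 0 ≤ x → 0 ≤ Wpq x)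
    (hWpq_mono : MonotoneOn Wpq (Set.Ici 0))
    (hWpq_neg : ∀ x, x < 0 → Wpq x = 0)
    (hWp_int : ∀ l, φ' < l →
      MeasureTheory.IntegrableOn (fun x => Real.exp (-(l * x)) * Wp x) (Set.Ioi 0))
    (hWp_lap : ∀ l, φ' < l →
      ∫ x in Set.Ioi (0:ℝ), Real.exp (-(l * x)) * Wp x = 1 / (ψ l - p))
    (hWpq_int : ∀ l, φ' < l →
      MeasureTheory.IntegrableOn (fun x => Real.exp (-(l * x)) * Wpq x) (Set.Ioi 0))
    (hWpq_lap : ∀ l, φ' < l →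
      ∫ x in Set.Ioi (0:ℝ), Real.exp (-(l * x)) * Wpq x = 1 / (ψ l - (p + q))) :
    ∀ a, 0 ≤ a → ∀ x : ℝ,
      (Wpq x - q * ∫ z in (0:ℝ)..a, Wpq (x - z) * Wp z
          = Wp x + q * ∫ z in a..x, Wpq (x - z) * Wp z) ∧
      (x ≤ a → Wpq x - q * ∫ z in (0:ℝ)..a, Wpq (x - z) * Wp z = Wp x) :=
  W_script_two_representations_general p q φ' hq ψ Wp Wpq hψ hWp_cont hWp_nonneg hWp_mono hWp_neg
    hWpq_cont hWpq_nonneg hWpq_mono hWpq_neg hWp_int hWp_lap hWpq_int hWpq_lap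
end

section
/- Under the stated hypotheses, for every λ > φ′ the integral ∫₀^∞ e^{−λx} H(x) dx converges and equals (1/(λ − φ)) · (1 + q/(ψ(λ) − (p + q))). (This is the explicit Laplace transform (3.5) of the function 𝓗^{(p,q)} of the paper.) -/
/-!
Put `s = λ - φ > 0` and `g z = e^{-φz} W_{p+q}(z)`, so that `e^{-λx} H(x) = e^{-sx} (1 + q ∫₀^x g)`
and `e^{-sz} g(z) = e^{-λz} W_{p+q}(z)`. By Fubini on `{0 < z ≤ x}`, the Laplace transform of a
primitive is `∫₀^∞ e^{-sx} ∫₀^x g = s⁻¹ ∫₀^∞ e^{-sz} g(z) dz`: integrating the kernel `e^{-sx} g(z)`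
in `x` first shows that it is integrable on that region as soon as `e^{-sz} g(z)` is integrable.
The assumed Laplace transform of `W_{p+q}` then gives the formula.
-/

open MeasureTheory Set Real

theorem integral_exp_neg_mul_Ioi {s : ℝ} (hs : 0 < s) (z : ℝ) :
    ∫ x in Ioi z, exp (-(s * x)) = exp (-(s * z)) / s := by
  simpa [neg_mul, neg_div_neg_eq] using integral_exp_mul_Ioi (neg_lt_zero.2 hs) z

theorem integrableOn_exp_neg_mul_Ioi {s : ℝ} (hs : 0 < s) (a : ℝ) :
    IntegrableOn (fun x => exp (-(s * x))) (Ioi a) := by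
  simpa only [neg_mul] using exp_neg_integrableOn_Ioi a hs

theorem setIntegral_Ioi_indicator_Ici {F : Type*} [NormedAddCommGroup F] [NormedSpace ℝ F]
    {a z : ℝ} (hz : a < z) (h : ℝ → F) :
    ∫ x in Ioi a, (Ici z).indicator h x = ∫ x in Ioi z, h x := by
  rw [setIntegral_indicator measurableSet_Ici, inter_eq_right.2 (Ici_subset_Ioi.2 hz),
    integral_Ici_eq_integral_Ioi]

theorem indicator_le_apply_eq_indicator_Ici {α β : Type*} [Preorder α] [Zero β]
    (f : α × α → β) (x z : α) :
    {p : α × α | p.2 ≤ p.1}.indicator f (x, z) = (Ici z).indicator (fun x => f (x, z)) x :=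
  rfl

theorem indicator_le_apply_eq_indicator_Iic {α β : Type*} [Preorder α] [Zero β]
    (f : α × α → β) (x z : α) :
    {p : α × α | p.2 ≤ p.1}.indicator f (x, z) = (Iic x).indicator (fun z => f (x, z)) z :=
  rfl

section LaplacePrimitive

variable {E : Type*} [NormedAddCommGroup E] [NormedSpace ℝ E] {s : ℝ} {g : ℝ → E}

theorem aestronglyMeasurable_of_integrableOn_exp_neg_mul_smul
    (hg : IntegrableOn (fun z => exp (-(s * z)) • g z) (Ioi 0)) :
    AEStronglyMeasurable g (volume.restrict (Ioi 0)) := by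
  refine ((by fun_prop : Continuous fun z => exp (s * z)).aestronglyMeasurable.smul
    hg.aestronglyMeasurable).congr (ae_of_all _ fun z => ?_)
  simp [smul_smul, ← exp_add]

theorem integrable_indicator_le_exp_neg_mul_smul (hs : 0 < s)
    (hg : IntegrableOn (fun z => exp (-(s * z)) • g z) (Ioi 0)) :
    Integrable ({p : ℝ × ℝ | p.2 ≤ p.1}.indicator fun p => exp (-(s * p.1)) • g p.2)
      ((volume.restrict (Ioi 0)).prod (volume.restrict (Ioi 0))) := by
  have h_meas : AEStronglyMeasurable ({p : ℝ × ℝ | p.2 ≤ p.1}.indicator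
      fun p => exp (-(s * p.1)) • g p.2) ((volume.restrict (Ioi 0)).prod (volume.restrict (Ioi 0))) :=
    ((continuous_exp.comp (continuous_const.mul continuous_fst).neg).aestronglyMeasurable.smul
      (aestronglyMeasurable_of_integrableOn_exp_neg_mul_smul hg).comp_snd).indicator
      (measurableSet_le measurable_snd measurable_fst)
  refine (integrable_prod_iff' h_meas).2 ⟨ae_of_all _ fun z => ?_, ?_⟩
  · simp_rw [indicator_le_apply_eq_indicator_Ici]
    exact ((integrableOn_exp_neg_mul_Ioi hs 0).smul_const (g z)).indicator measurableSet_Ici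
  · refine (hg.norm.const_mul s⁻¹).congr ?_
    filter_upwards [ae_restrict_mem measurableSet_Ioi] with z hz
    simp_rw [indicator_le_apply_eq_indicator_Ici, norm_indicator_eq_indicator_norm, norm_smul,
      norm_of_nonneg (exp_pos _).le]
    rw [setIntegral_Ioi_indicator_Ici hz, integral_mul_const, integral_exp_neg_mul_Ioi hs]
    ring

theorem integral_Ioi_indicator_le_exp_neg_mul_smul {x : ℝ} (hx : 0 < x) :
    ∫ z in Ioi 0, {p : ℝ × ℝ | p.2 ≤ p.1}.indicator (fun p => exp (-(s * p.1)) • g p.2) (x, z)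
      = exp (-(s * x)) • ∫ z in 0..x, g z := by
  simp_rw [indicator_le_apply_eq_indicator_Iic]
  rw [setIntegral_indicator measurableSet_Iic, Ioi_inter_Iic, integral_smul,
    intervalIntegral.integral_of_le hx.le]

theorem integrableOn_exp_neg_mul_smul_intervalIntegral (hs : 0 < s)
    (hg : IntegrableOn (fun z => exp (-(s * z)) • g z) (Ioi 0)) :
    IntegrableOn (fun x => exp (-(s * x)) • ∫ z in 0..x, g z) (Ioi 0) :=
  (integrable_indicator_le_exp_neg_mul_smul hs hg).integral_prod_left.congr
    ((ae_restrict_mem measurableSet_Ioi).mono fun _ hx =>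
      integral_Ioi_indicator_le_exp_neg_mul_smul hx)

theorem integral_exp_neg_mul_smul_intervalIntegral [CompleteSpace E] (hs : 0 < s)
    (hg : IntegrableOn (fun z => exp (-(s * z)) • g z) (Ioi 0)) :
    ∫ x in Ioi 0, exp (-(s * x)) • ∫ z in 0..x, g z
      = s⁻¹ • ∫ z in Ioi 0, exp (-(s * z)) • g z := by
  let f : ℝ × ℝ → E := {p : ℝ × ℝ | p.2 ≤ p.1}.indicator fun p => exp (-(s * p.1)) • g p.2
  calc ∫ x in Ioi 0, exp (-(s * x)) • ∫ z in 0..x, g z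
      = ∫ x in Ioi 0, ∫ z in Ioi 0, f (x, z) :=
        setIntegral_congr_fun measurableSet_Ioi fun _ hx =>
          (integral_Ioi_indicator_le_exp_neg_mul_smul hx).symm
    _ = ∫ z in Ioi 0, ∫ x in Ioi 0, f (x, z) :=
        integral_integral_swap (integrable_indicator_le_exp_neg_mul_smul hs hg)
    _ = ∫ z in Ioi 0, s⁻¹ • exp (-(s * z)) • g z := by
        refine setIntegral_congr_fun measurableSet_Ioi fun z hz => ?_
        simp only [f, indicator_le_apply_eq_indicator_Ici]
        rw [setIntegral_Ioi_indicator_Ici hz, integral_smul_const, integral_exp_neg_mul_Ioi hs,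
          smul_smul, div_eq_inv_mul]
    _ = s⁻¹ • ∫ z in Ioi 0, exp (-(s * z)) • g z := integral_smul _ _

end LaplacePrimitive

/-- The function `𝓗^{(p,q)}` of the paper, with `φ = Φ(p)` and `W = W^{(p+q)}`. -/
noncomputable def calH (φ q : ℝ) (W : ℝ → ℝ) (x : ℝ) : ℝ :=
  exp (φ * x) * (1 + q * ∫ z in 0..x, exp (-(φ * z)) * W z)

section calH

variable {φ q l : ℝ} {W : ℝ → ℝ}

theorem exp_neg_mul_smul_exp_neg_mul (φ l z w : ℝ) :
    exp (-((l - φ) * z)) • (exp (-(φ * z)) * w) = exp (-(l * z)) * w := by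
  rw [smul_eq_mul, ← mul_assoc, ← exp_add]
  ring_nf

theorem exp_neg_mul_mul_calH (x : ℝ) :
    exp (-(l * x)) * calH φ q W x
      = exp (-((l - φ) * x)) + q * (exp (-((l - φ) * x)) • ∫ z in 0..x, exp (-(φ * z)) * W z) := by
  rw [calH, smul_eq_mul, ← mul_assoc, ← exp_add]
  ring_nf

theorem integrableOn_exp_neg_mul_smul_exp_neg_mul
    (hW : IntegrableOn (fun z => exp (-(l * z)) * W z) (Ioi 0)) :
    IntegrableOn (fun z => exp (-((l - φ) * z)) • (exp (-(φ * z)) * W z)) (Ioi 0) := by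
  simpa only [exp_neg_mul_smul_exp_neg_mul] using hW

theorem integrableOn_exp_neg_mul_mul_calH (hφl : φ < l)
    (hW : IntegrableOn (fun z => exp (-(l * z)) * W z) (Ioi 0)) :
    IntegrableOn (fun x => exp (-(l * x)) * calH φ q W x) (Ioi 0) := by
  have hs : 0 < l - φ := sub_pos.2 hφl
  simp_rw [exp_neg_mul_mul_calH]
  exact (integrableOn_exp_neg_mul_Ioi hs 0).add
    ((integrableOn_exp_neg_mul_smul_intervalIntegral hs
      (integrableOn_exp_neg_mul_smul_exp_neg_mul hW)).const_mul q)

theorem integral_exp_neg_mul_mul_calH (hφl : φ < l)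
    (hW : IntegrableOn (fun z => exp (-(l * z)) * W z) (Ioi 0)) :
    ∫ x in Ioi 0, exp (-(l * x)) * calH φ q W x
      = (1 / (l - φ)) * (1 + q * ∫ z in Ioi 0, exp (-(l * z)) * W z) := by
  have hs : 0 < l - φ := sub_pos.2 hφl
  have hg := integrableOn_exp_neg_mul_smul_exp_neg_mul (φ := φ) hW
  simp_rw [exp_neg_mul_mul_calH]
  rw [integral_add (integrableOn_exp_neg_mul_Ioi hs 0)
      ((integrableOn_exp_neg_mul_smul_intervalIntegral hs hg).const_mul q),
    integral_const_mul, integral_exp_neg_mul_smul_intervalIntegral hs hg,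
    integral_exp_neg_mul_Ioi hs]
  simp_rw [exp_neg_mul_smul_exp_neg_mul]
  simp only [smul_eq_mul, mul_zero, neg_zero, exp_zero]
  ring

end calH

theorem H_laplace_transform_general
    (p q φ φ' : ℝ) (hφφ' : φ ≤ φ')
    (ψ Wpq : ℝ → ℝ)
    (hWpq_int : ∀ l, φ' < l →
      MeasureTheory.IntegrableOn (fun x => Real.exp (-(l * x)) * Wpq x) (Set.Ioi 0))
    (hWpq_lap : ∀ l, φ' < l →
      ∫ x in Set.Ioi (0:ℝ), Real.exp (-(l * x)) * Wpq x = 1 / (ψ l - (p + q)))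
    (H : ℝ → ℝ)
    (hH : ∀ x : ℝ, H x
      = Real.exp (φ * x) * (1 + q * ∫ z in (0:ℝ)..x, Real.exp (-(φ * z)) * Wpq z)) :
    ∀ l, φ' < l →
      MeasureTheory.IntegrableOn (fun x => Real.exp (-(l * x)) * H x) (Set.Ioi 0) ∧
      ∫ x in Set.Ioi (0:ℝ), Real.exp (-(l * x)) * H x
        = (1 / (l - φ)) * (1 + q / (ψ l - (p + q))) := by
  intro l hl
  have hφl : φ < l := hφφ'.trans_lt hl
  obtain rfl : H = calH φ q Wpq := funext hH
  refine ⟨integrableOn_exp_neg_mul_mul_calH hφl (hWpq_int l hl), ?_⟩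
  rw [integral_exp_neg_mul_mul_calH hφl (hWpq_int l hl), hWpq_lap l hl]
  ring

/-- Equation (3.5) of the paper: the Laplace transform of 𝓗^{(p,q)} on [0,∞) is
`(λ − Φ(p))⁻¹ (1 + q/(ψ(λ) − (p+q)))` for λ > Φ(p+q). -/
theorem H_laplace_transform
    (p q φ φ' : ℝ) (hp : 0 ≤ p) (hq : 0 ≤ q) (hφφ' : φ ≤ φ')
    (ψ Wp Wpq : ℝ → ℝ)
    (hψ : ∀ l, φ' < l → p + q < ψ l)
    (hWp_cont : ContinuousOn Wp (Set.Ici 0))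
    (hWp_nonneg : ∀ x, 0 ≤ x → 0 ≤ Wp x)
    (hWp_mono : MonotoneOn Wp (Set.Ici 0))
    (hWp_neg : ∀ x, x < 0 → Wp x = 0)
    (hWpq_cont : ContinuousOn Wpq (Set.Ici 0))
    (hWpq_nonneg : ∀ x, 0 ≤ x → 0 ≤ Wpq x)
    (hWpq_mono : MonotoneOn Wpq (Set.Ici 0))
    (hWpq_neg : ∀ x, x < 0 → Wpq x = 0)
    (hWp_int : ∀ l, φ' < l →
      MeasureTheory.IntegrableOn (fun x => Real.exp (-(l * x)) * Wp x) (Set.Ioi 0))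
    (hWp_lap : ∀ l, φ' < l →
      ∫ x in Set.Ioi (0:ℝ), Real.exp (-(l * x)) * Wp x = 1 / (ψ l - p))
    (hWpq_int : ∀ l, φ' < l →
      MeasureTheory.IntegrableOn (fun x => Real.exp (-(l * x)) * Wpq x) (Set.Ioi 0))
    (hWpq_lap : ∀ l, φ' < l →
      ∫ x in Set.Ioi (0:ℝ), Real.exp (-(l * x)) * Wpq x = 1 / (ψ l - (p + q)))
    (H : ℝ → ℝ)
    (hH : ∀ x : ℝ, H x
      = Real.exp (φ * x) * (1 + q * ∫ z in (0:ℝ)..x, Real.exp (-(φ * z)) * Wpq z)) :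
    ∀ l, φ' < l →
      MeasureTheory.IntegrableOn (fun x => Real.exp (-(l * x)) * H x) (Set.Ioi 0) ∧
      ∫ x in Set.Ioi (0:ℝ), Real.exp (-(l * x)) * H x
        = (1 / (l - φ)) * (1 + q / (ψ l - (p + q))) :=
  H_laplace_transform_general p q φ φ' hφφ' ψ Wpq hWpq_int hWpq_lap H hH
end

section
/- Under the stated hypotheses, for every λ > φ′ the integral ∫₀^∞ e^{−λx} ( ∫₀^x W_p(x − y) H(y) dy ) dx converges and equals (1/(λ − φ)) · (1/(ψ(λ) − (p + q))). (This is the Laplace transform of the convolution x ↦ ∫₀^x W^{(p)}(x−y) 𝓗^{(p,q)}(y) dy computed at the beginning of Appendix A of the paper.) -/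
/-!
Laplace transforms on the half-line turn convolutions `(f ⋆ g)(x) = ∫₀ˣ f(x - y) g(y) dy` into
products. Since `H = e^{φ·} + q (e^{φ·} ⋆ W_{p+q})`, its transform at `λ > φ'` is
`(1 + q / (ψ(λ) - p - q)) / (λ - φ) = (ψ(λ) - p) / ((λ - φ)(ψ(λ) - p - q))`, and multiplying by the
transform `1 / (ψ(λ) - p)` of `W_p` gives the claim.
-/

open MeasureTheory Set Real

namespace HalfLine

noncomputable def laplace (f : ℝ → ℝ) (l : ℝ) : ℝ :=
  ∫ x in Ioi 0, exp (-(l * x)) * f x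

def LaplaceIntegrable (f : ℝ → ℝ) (l : ℝ) : Prop :=
  IntegrableOn (fun x => exp (-(l * x)) * f x) (Ioi 0)

noncomputable def conv (f g : ℝ → ℝ) (x : ℝ) : ℝ :=
  ∫ y in (0 : ℝ)..x, f (x - y) * g y

variable {f g : ℝ → ℝ} {l : ℝ}

theorem laplaceIntegrable_add (hf : LaplaceIntegrable f l) (hg : LaplaceIntegrable g l) :
    LaplaceIntegrable (f + g) l := by
  refine (hf.add hg).congr_fun (fun x _ => ?_) measurableSet_Ioi
  simp only [Pi.add_apply, mul_add]

theorem laplace_add (hf : LaplaceIntegrable f l) (hg : LaplaceIntegrable g l) :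
    laplace (f + g) l = laplace f l + laplace g l := by
  simp only [laplace, Pi.add_apply, mul_add]
  exact integral_add hf hg

theorem laplaceIntegrable_const_mul (c : ℝ) (hf : LaplaceIntegrable f l) :
    LaplaceIntegrable (fun x => c * f x) l :=
  IntegrableOn.congr_fun (Integrable.const_mul hf c) (fun _ _ => mul_left_comm ..)
    measurableSet_Ioi

theorem laplace_const_mul (c : ℝ) (f : ℝ → ℝ) (l : ℝ) :
    laplace (fun x => c * f x) l = c * laplace f l := by
  simp only [laplace, mul_left_comm _ c, integral_const_mul]

theorem laplaceIntegrable_exp_mul {φ : ℝ} (h : φ < l) :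
    LaplaceIntegrable (fun x => exp (φ * x)) l := by
  simpa only [LaplaceIntegrable, ← exp_add, ← add_mul, neg_mul_eq_neg_mul, neg_add_eq_sub]
    using integrableOn_exp_mul_Ioi (sub_neg.2 h) 0

theorem laplace_exp_mul {φ : ℝ} (h : φ < l) :
    laplace (fun x => exp (φ * x)) l = 1 / (l - φ) := by
  simp only [laplace, ← exp_add, ← add_mul, neg_mul_eq_neg_mul, neg_add_eq_sub]
  rw [integral_exp_mul_Ioi (sub_neg.2 h), mul_zero, exp_zero, neg_div, ← div_neg, neg_sub]

theorem posConvolution_exp_weight (f g : ℝ → ℝ) (l : ℝ) {x : ℝ} (hx : 0 < x) :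
    posConvolution (fun t => exp (-(l * t)) * g t) (fun t => exp (-(l * t)) * f t)
      (ContinuousLinearMap.mul ℝ ℝ) volume x = exp (-(l * x)) * conv f g x := by
  rw [posConvolution, indicator_of_mem (mem_Ioi.2 hx), conv, ← intervalIntegral.integral_const_mul]
  refine intervalIntegral.integral_congr fun t _ => ?_
  have hexp : exp (-(l * t)) * exp (-(l * (x - t))) = exp (-(l * x)) := by
    rw [← exp_add]; ring_nf
  simp only [ContinuousLinearMap.mul_apply']
  linear_combination (g t * f (x - t)) * hexp

theorem laplaceIntegrable_conv (hf : LaplaceIntegrable f l) (hg : LaplaceIntegrable g l) :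
    LaplaceIntegrable (conv f g) l :=
  (integrable_posConvolution hg hf (ContinuousLinearMap.mul ℝ ℝ)).integrableOn.congr_fun
    (fun _ hx => posConvolution_exp_weight f g l hx) measurableSet_Ioi

theorem laplace_conv (hf : LaplaceIntegrable f l) (hg : LaplaceIntegrable g l) :
    laplace (conv f g) l = laplace f l * laplace g l := by
  have h := integral_posConvolution hg hf (ContinuousLinearMap.mul ℝ ℝ)
  rw [ContinuousLinearMap.mul_apply', mul_comm] at h
  unfold laplace
  rw [← h]
  refine setIntegral_congr_fun measurableSet_Ioi fun x hx => ?_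
  rw [← posConvolution_exp_weight f g l hx, posConvolution, indicator_of_mem hx]

theorem exp_mul_mul_integral_exp_neg_mul (φ : ℝ) (g : ℝ → ℝ) (x : ℝ) :
    exp (φ * x) * ∫ z in (0 : ℝ)..x, exp (-(φ * z)) * g z = conv (fun x => exp (φ * x)) g x := by
  rw [conv, ← intervalIntegral.integral_const_mul]
  refine intervalIntegral.integral_congr fun z _ => ?_
  simp only [← mul_assoc, ← exp_add]
  ring_nf

end HalfLine

open HalfLine

theorem convolution_laplace_transform_general
    (p q φ φ' : ℝ) (hq : 0 ≤ q) (hφφ' : φ ≤ φ')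
    (ψ Wp Wpq : ℝ → ℝ)
    (hψ : ∀ l, φ' < l → p + q < ψ l)
    (hWp_int : ∀ l, φ' < l →
      MeasureTheory.IntegrableOn (fun x => Real.exp (-(l * x)) * Wp x) (Set.Ioi 0))
    (hWp_lap : ∀ l, φ' < l →
      ∫ x in Set.Ioi (0:ℝ), Real.exp (-(l * x)) * Wp x = 1 / (ψ l - p))
    (hWpq_int : ∀ l, φ' < l →
      MeasureTheory.IntegrableOn (fun x => Real.exp (-(l * x)) * Wpq x) (Set.Ioi 0))
    (hWpq_lap : ∀ l, φ' < l →
      ∫ x in Set.Ioi (0:ℝ), Real.exp (-(l * x)) * Wpq x = 1 / (ψ l - (p + q)))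
    (H : ℝ → ℝ)
    (hH : ∀ x : ℝ, H x
      = Real.exp (φ * x) * (1 + q * ∫ z in (0:ℝ)..x, Real.exp (-(φ * z)) * Wpq z)) :
    ∀ l, φ' < l →
      MeasureTheory.IntegrableOn
        (fun x => Real.exp (-(l * x)) * ∫ y in (0:ℝ)..x, Wp (x - y) * H y) (Set.Ioi 0) ∧
      ∫ x in Set.Ioi (0:ℝ), Real.exp (-(l * x)) * ∫ y in (0:ℝ)..x, Wp (x - y) * H y
        = (1 / (l - φ)) * (1 / (ψ l - (p + q))) := by
  intro l hl
  have hφl : φ < l := hφφ'.trans_lt hl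
  have hψpq : 0 < ψ l - (p + q) := sub_pos.2 (hψ l hl)
  have hψp : 0 < ψ l - p := by linarith
  have hH_eq : H = (fun x => exp (φ * x)) + fun x => q * conv (fun x => exp (φ * x)) Wpq x := by
    ext x
    rw [hH, mul_add, mul_one, mul_left_comm, exp_mul_mul_integral_exp_neg_mul, Pi.add_apply]
  have hexp := laplaceIntegrable_exp_mul hφl
  have hconv := laplaceIntegrable_conv hexp (hWpq_int l hl)
  have hH_int : LaplaceIntegrable H l :=
    hH_eq ▸ laplaceIntegrable_add hexp (laplaceIntegrable_const_mul q hconv)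
  have hH_lap : laplace H l = (ψ l - p) / ((l - φ) * (ψ l - (p + q))) := by
    rw [hH_eq, laplace_add hexp (laplaceIntegrable_const_mul q hconv), laplace_const_mul,
      laplace_conv hexp (hWpq_int l hl), laplace_exp_mul hφl, laplace, hWpq_lap l hl]
    field_simp
    ring
  refine ⟨laplaceIntegrable_conv (hWp_int l hl) hH_int, ?_⟩
  change laplace (conv Wp H) l = _
  rw [laplace_conv (hWp_int l hl) hH_int, laplace, hWp_lap l hl, hH_lap]
  field_simp

/-- The Laplace transform of the convolution x ↦ ∫₀ˣ W^{(p)}(x−y) 𝓗^{(p,q)}(y) dy,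
computed at the beginning of Appendix A of the paper. -/
theorem convolution_laplace_transform
    (p q φ φ' : ℝ) (hp : 0 ≤ p) (hq : 0 ≤ q) (hφφ' : φ ≤ φ')
    (ψ Wp Wpq : ℝ → ℝ)
    (hψ : ∀ l, φ' < l → p + q < ψ l)
    (hWp_cont : ContinuousOn Wp (Set.Ici 0))
    (hWp_nonneg : ∀ x, 0 ≤ x → 0 ≤ Wp x)
    (hWp_mono : MonotoneOn Wp (Set.Ici 0))
    (hWp_neg : ∀ x, x < 0 → Wp x = 0)
    (hWpq_cont : ContinuousOn Wpq (Set.Ici 0))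
    (hWpq_nonneg : ∀ x, 0 ≤ x → 0 ≤ Wpq x)
    (hWpq_mono : MonotoneOn Wpq (Set.Ici 0))
    (hWpq_neg : ∀ x, x < 0 → Wpq x = 0)
    (hWp_int : ∀ l, φ' < l →
      MeasureTheory.IntegrableOn (fun x => Real.exp (-(l * x)) * Wp x) (Set.Ioi 0))
    (hWp_lap : ∀ l, φ' < l →
      ∫ x in Set.Ioi (0:ℝ), Real.exp (-(l * x)) * Wp x = 1 / (ψ l - p))
    (hWpq_int : ∀ l, φ' < l →
      MeasureTheory.IntegrableOn (fun x => Real.exp (-(l * x)) * Wpq x) (Set.Ioi 0))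
    (hWpq_lap : ∀ l, φ' < l →
      ∫ x in Set.Ioi (0:ℝ), Real.exp (-(l * x)) * Wpq x = 1 / (ψ l - (p + q)))
    (H : ℝ → ℝ)
    (hH : ∀ x : ℝ, H x
      = Real.exp (φ * x) * (1 + q * ∫ z in (0:ℝ)..x, Real.exp (-(φ * z)) * Wpq z)) :
    ∀ l, φ' < l →
      MeasureTheory.IntegrableOn
        (fun x => Real.exp (-(l * x)) * ∫ y in (0:ℝ)..x, Wp (x - y) * H y) (Set.Ioi 0) ∧
      ∫ x in Set.Ioi (0:ℝ), Real.exp (-(l * x)) * ∫ y in (0:ℝ)..x, Wp (x - y) * H y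
        = (1 / (l - φ)) * (1 / (ψ l - (p + q))) :=
  convolution_laplace_transform_general p q φ φ' hq hφφ' ψ Wp Wpq hψ hWp_int hWp_lap hWpq_int
    hWpq_lap H hH
end

section
/- Under the stated hypotheses, for every x ∈ ℝ one has ∫₀^x W_p(x − z) H(z) dz = ∫₀^x e^{φ(x − z)} W_{p+q}(z) dz. (This is the convolution identity established at the beginning of Appendix A of the paper.) -/
/-!
Write `E y = exp (φ * y)` and `u ⋆ v` for the convolution `∫₀ˣ u (x - t) v t dt`. Then
`H = E + q • (E ⋆ W_{p+q})`, and both sides of the identity, `W_p ⋆ H` and `E ⋆ W_{p+q}`, are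
continuous functions of exponential order on `[0, ∞)`. For `λ > φ'` their Laplace transforms are
`(1 + q / (ψ λ - p - q)) / ((ψ λ - p) (λ - φ))` and `1 / ((ψ λ - p - q) (λ - φ))`, which agree, so
they coincide on `[0, ∞)` by Lerch's theorem. That theorem is proved by substituting `t = exp (-x)`,
which turns the Laplace transform at `n + 1` into the `n`-th moment of a continuous function on
`[0, 1]`, and moments determine such a function by Weierstrass approximation. For `x < 0` both
sides vanish since `W_p` and `W_{p+q}` do.
-/

open MeasureTheory Set Real Filter Topology

namespace Laplace

noncomputable def conv (u v : ℝ → ℝ) (x : ℝ) : ℝ := ∫ t in (0:ℝ)..x, u (x - t) * v t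

noncomputable def laplace (f : ℝ → ℝ) (s : ℝ) : ℝ := ∫ x in Ioi (0:ℝ), exp (-(s * x)) * f x

def HasLaplace (f : ℝ → ℝ) (s a : ℝ) : Prop :=
  IntegrableOn (fun x => exp (-(s * x)) * f x) (Ioi 0) ∧ laplace f s = a

def ExpBounded (f : ℝ → ℝ) : Prop := ∃ K R : ℝ, ∀ x, 0 ≤ x → |f x| ≤ K * exp (R * x)

variable {f g u v : ℝ → ℝ} {s a b : ℝ}

theorem conv_comm (u v : ℝ → ℝ) (x : ℝ) : conv u v x = conv v u x := by
  have h := intervalIntegral.integral_comp_sub_left (fun t => u t * v (x - t)) (a := 0) (b := x) x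
  simp only [sub_sub_cancel, sub_self, sub_zero] at h
  rw [conv, conv, h]
  exact intervalIntegral.integral_congr fun t _ => mul_comm _ _

theorem conv_eq_zero_of_nonpos (u : ℝ → ℝ) (hv : ∀ t, t < 0 → v t = 0) {x : ℝ} (hx : x ≤ 0) :
    conv u v x = 0 := by
  rw [conv, intervalIntegral.integral_congr_ae (g := fun _ => 0), intervalIntegral.integral_zero]
  filter_upwards [Measure.ae_ne volume 0] with t ht htx
  rw [uIoc_of_ge hx] at htx
  rw [hv t (lt_of_le_of_ne htx.2 ht), mul_zero]

theorem conv_exp_mul (c : ℝ) (v : ℝ → ℝ) (x : ℝ) :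
    conv (fun y => exp (c * y)) v x = exp (c * x) * ∫ t in (0:ℝ)..x, exp (-(c * t)) * v t := by
  rw [conv, ← intervalIntegral.integral_const_mul]
  refine intervalIntegral.integral_congr fun t _ => ?_
  simp only [← mul_assoc, ← exp_add]
  ring_nf

theorem continuousOn_conv (hu : ContinuousOn u (Ici 0)) (hv : ContinuousOn v (Ici 0)) :
    ContinuousOn (conv u v) (Ici 0) := by
  have hext : ∀ {w : ℝ → ℝ}, ContinuousOn w (Ici 0) → Continuous fun t => w (max t 0) :=
    fun hw => hw.comp_continuous (continuous_id.max continuous_const) fun t => le_max_right t 0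
  -- extending `u` and `v` continuously to `ℝ` does not change `conv u v` on `[0, ∞)`
  have hcont : Continuous fun x => ∫ t in (0:ℝ)..x, u (max (x - t) 0) * v (max t 0) :=
    (intervalIntegral.continuous_parametric_primitive_of_continuous (a₀ := 0)
      (f := fun x t => u (max (x - t) 0) * v (max t 0))
      (((hext hu).comp continuous_sub).mul ((hext hv).comp continuous_snd))).comp
      (continuous_id.prodMk continuous_id)
  refine hcont.continuousOn.congr fun x hx => intervalIntegral.integral_congr fun t ht => ?_
  rw [uIcc_of_le (mem_Ici.mp hx)] at ht
  simp only [max_eq_left ht.1, max_eq_left (sub_nonneg.mpr ht.2)]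

theorem HasLaplace.add (hf : HasLaplace f s a) (hg : HasLaplace g s b) :
    HasLaplace (fun x => f x + g x) s (a + b) := by
  refine ⟨?_, ?_⟩
  · simp only [mul_add]
    exact hf.1.add hg.1
  rw [← hf.2, ← hg.2]
  simp only [laplace, mul_add]
  exact integral_add hf.1 hg.1

theorem HasLaplace.sub (hf : HasLaplace f s a) (hg : HasLaplace g s b) :
    HasLaplace (fun x => f x - g x) s (a - b) := by
  refine ⟨?_, ?_⟩
  · simp only [mul_sub]
    exact hf.1.sub hg.1
  rw [← hf.2, ← hg.2]
  simp only [laplace, mul_sub]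
  exact integral_sub hf.1 hg.1

theorem HasLaplace.const_mul (hf : HasLaplace f s a) (c : ℝ) :
    HasLaplace (fun x => c * f x) s (c * a) := by
  refine ⟨?_, ?_⟩
  · simp only [mul_left_comm _ c]
    exact hf.1.const_mul c
  rw [← hf.2]
  simp only [laplace, mul_left_comm _ c]
  exact integral_const_mul c _

theorem hasLaplace_exp_mul {c : ℝ} (hcs : c < s) :
    HasLaplace (fun x => exp (c * x)) s (s - c)⁻¹ := by
  have hexp : (fun x => exp (-(s * x)) * exp (c * x)) = fun x => exp ((c - s) * x) := by
    ext x; rw [← exp_add]; ring_nf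
  refine ⟨by simpa only [hexp] using integrableOn_exp_mul_Ioi (sub_neg.mpr hcs) 0, ?_⟩
  simp only [laplace, hexp, integral_exp_mul_Ioi (sub_neg.mpr hcs), mul_zero, exp_zero]
  rw [neg_div, ← div_neg, neg_sub, one_div]

theorem hasLaplace_conv (hf : HasLaplace f s a) (hg : HasLaplace g s b) :
    HasLaplace (conv f g) s (a * b) := by
  let L := ContinuousLinearMap.mul ℝ ℝ
  have hprod : ∀ x, ∫ t in (0:ℝ)..x, L (exp (-(s * t)) * g t) (exp (-(s * (x - t))) * f (x - t))
      = exp (-(s * x)) * conv f g x := fun x => by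
    rw [conv, ← intervalIntegral.integral_const_mul]
    refine intervalIntegral.integral_congr fun t _ => ?_
    have hexp : exp (-(s * t)) * exp (-(s * (x - t))) = exp (-(s * x)) := by
      rw [← exp_add]; ring_nf
    simp only [L, ContinuousLinearMap.mul_apply']
    linear_combination (f (x - t) * g t) * hexp
  have hint := integrable_posConvolution hg.1 hf.1 L
  rw [posConvolution, integrable_indicator_iff measurableSet_Ioi] at hint
  refine ⟨by simpa only [hprod] using hint, ?_⟩
  have h := integral_posConvolution hg.1 hf.1 L
  simp only [hprod] at h
  change _ = L (laplace g s) (laplace f s) at h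
  rw [laplace, h, hf.2, hg.2, ContinuousLinearMap.mul_apply', mul_comm]

theorem abs_le_mul_exp_of_rate_le {K R R' : ℝ} (hf : ∀ x, 0 ≤ x → |f x| ≤ K * exp (R * x))
    (hR : R ≤ R') : ∀ x, 0 ≤ x → |f x| ≤ K * exp (R' * x) := by
  have hK : 0 ≤ K := by simpa using (abs_nonneg _).trans (hf 0 le_rfl)
  intro x hx
  exact (hf x hx).trans (by gcongr)

theorem ExpBounded.of_abs_le_add {w : ℝ → ℝ} (hf : ExpBounded f) (hg : ExpBounded g)
    (hw : ∀ x, 0 ≤ x → |w x| ≤ |f x| + |g x|) : ExpBounded w := by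
  obtain ⟨K₁, R₁, h₁⟩ := hf
  obtain ⟨K₂, R₂, h₂⟩ := hg
  refine ⟨K₁ + K₂, max R₁ R₂, fun x hx => ?_⟩
  have := abs_le_mul_exp_of_rate_le h₁ (le_max_left R₁ R₂) x hx
  have := abs_le_mul_exp_of_rate_le h₂ (le_max_right R₁ R₂) x hx
  linarith [hw x hx]

theorem ExpBounded.add (hf : ExpBounded f) (hg : ExpBounded g) :
    ExpBounded fun x => f x + g x :=
  hf.of_abs_le_add hg fun _ _ => abs_add_le _ _

theorem ExpBounded.sub (hf : ExpBounded f) (hg : ExpBounded g) :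
    ExpBounded fun x => f x - g x :=
  hf.of_abs_le_add hg fun _ _ => abs_sub _ _

theorem ExpBounded.const_mul (hf : ExpBounded f) (c : ℝ) : ExpBounded fun x => c * f x := by
  obtain ⟨K, R, h⟩ := hf
  refine ⟨|c| * K, R, fun x hx => ?_⟩
  rw [abs_mul, mul_assoc]
  exact mul_le_mul_of_nonneg_left (h x hx) (abs_nonneg c)

theorem expBounded_exp_mul (c : ℝ) : ExpBounded fun x => exp (c * x) :=
  ⟨1, c, fun x _ => by rw [abs_of_pos (exp_pos _), one_mul]⟩

theorem expBounded_conv (hu : ExpBounded u) (hv : ExpBounded v) : ExpBounded (conv u v) := by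
  obtain ⟨K₁, R₁, h₁⟩ := hu
  obtain ⟨K₂, R₂, h₂⟩ := hv
  set R := max R₁ R₂
  have h₁' := abs_le_mul_exp_of_rate_le h₁ (le_max_left R₁ R₂)
  have h₂' := abs_le_mul_exp_of_rate_le h₂ (le_max_right R₁ R₂)
  have hK₁ : 0 ≤ K₁ := by simpa using (abs_nonneg _).trans (h₁ 0 le_rfl)
  have hK₂ : 0 ≤ K₂ := by simpa using (abs_nonneg _).trans (h₂ 0 le_rfl)
  refine ⟨K₁ * K₂, R + 1, fun x hx => ?_⟩
  have hint : ∀ t ∈ uIoc 0 x, ‖u (x - t) * v t‖ ≤ K₁ * K₂ * exp (R * x) := fun t ht => by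
    rw [uIoc_of_le hx] at ht
    have hexp : exp (R * (x - t)) * exp (R * t) = exp (R * x) := by rw [← exp_add]; ring_nf
    rw [Real.norm_eq_abs, abs_mul]
    calc |u (x - t)| * |v t| ≤ K₁ * exp (R * (x - t)) * (K₂ * exp (R * t)) :=
          mul_le_mul (h₁' _ (sub_nonneg.mpr ht.2)) (h₂' t ht.1.le) (abs_nonneg _)
            (by positivity)
      _ = K₁ * K₂ * exp (R * x) := by rw [← hexp]; ring
  calc |conv u v x| ≤ K₁ * K₂ * exp (R * x) * |x - 0| :=
        intervalIntegral.norm_integral_le_of_norm_le_const hint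
    _ ≤ K₁ * K₂ * exp (R * x) * exp x := by
        rw [sub_zero, abs_of_nonneg hx]
        exact mul_le_mul_of_nonneg_left ((add_one_le_exp x).trans' (by linarith)) (by positivity)
    _ = K₁ * K₂ * exp ((R + 1) * x) := by rw [mul_assoc, ← exp_add]; ring_nf

theorem ExpBounded.of_monotoneOn {m : ℝ} (hm : 0 ≤ m) (hf₀ : ∀ x, 0 ≤ x → 0 ≤ f x)
    (hf : MonotoneOn f (Ici 0)) (hint : IntegrableOn (fun x => exp (-(m * x)) * f x) (Ioi 0)) :
    ExpBounded f := by
  set I := ∫ t in Ioi 0, exp (-(m * t)) * f t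
  refine ⟨exp m * I, m, fun x hx => ?_⟩
  have hsub : Ioc x (x + 1) ⊆ Ioi 0 := fun t ht => hx.trans_lt ht.1
  have hlow : exp (-(m * (x + 1))) * f x ≤ ∫ t in Ioc x (x + 1), exp (-(m * t)) * f t := by
    have h := setIntegral_ge_of_const_le_real measurableSet_Ioc measure_Ioc_lt_top.ne
      (fun t ht => mul_le_mul (exp_le_exp.mpr <| neg_le_neg <| mul_le_mul_of_nonneg_left ht.2 hm)
        (hf hx (hx.trans ht.1.le) ht.1.le) (hf₀ x hx) (exp_pos _).le)
      (hint.mono_set hsub)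
    simpa [Measure.real, Real.volume_Ioc] using h
  have hup : ∫ t in Ioc x (x + 1), exp (-(m * t)) * f t ≤ I :=
    setIntegral_mono_set hint
      ((ae_restrict_iff' measurableSet_Ioi).mpr (Eventually.of_forall fun t ht =>
        mul_nonneg (exp_pos _).le (hf₀ t (le_of_lt ht))))
      hsub.eventuallyLE
  rw [abs_of_nonneg (hf₀ x hx)]
  calc f x = exp (m * (x + 1)) * (exp (-(m * (x + 1))) * f x) := by
        rw [← mul_assoc, ← exp_add, add_neg_cancel, exp_zero, one_mul]
    _ ≤ exp (m * (x + 1)) * I := by gcongr; exact hlow.trans hup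
    _ = exp m * I * exp (m * x) := by rw [mul_add, mul_one, exp_add]; ring

open Polynomial in
theorem eqOn_zero_of_forall_integral_pow_mul_eq_zero {h : ℝ → ℝ} (hh : ContinuousOn h (Icc 0 1))
    (hmom : ∀ n : ℕ, ∫ t in (0:ℝ)..1, t ^ n * h t = 0) : EqOn h 0 (Icc 0 1) := by
  have hint : ∀ P : ℝ[X], IntervalIntegrable (fun t => P.eval t * h t) volume 0 1 := fun P =>
    (P.continuous.continuousOn.mul hh).intervalIntegrable_of_Icc zero_le_one
  have hpoly : ∀ P : ℝ[X], ∫ t in (0:ℝ)..1, P.eval t * h t = 0 := by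
    intro P
    induction P using Polynomial.induction_on' with
    | add P Q hP hQ =>
      simp only [eval_add, add_mul]
      rw [intervalIntegral.integral_add (hint P) (hint Q), hP, hQ, add_zero]
    | monomial n c =>
      simp only [eval_monomial, mul_assoc]
      rw [intervalIntegral.integral_const_mul, hmom, mul_zero]
  obtain ⟨B, hB⟩ := isCompact_Icc.exists_bound_of_continuousOn hh
  have hB₀ : 0 ≤ B := (norm_nonneg _).trans (hB 0 (left_mem_Icc.mpr zero_le_one))
  have hsq_int : IntervalIntegrable (fun t => h t * h t) volume 0 1 :=
    (hh.mul hh).intervalIntegrable_of_Icc zero_le_one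
  -- `∫ h * h = ∫ (h - P) * h` is small for a polynomial `P` uniformly close to `h`
  have hsq : ∫ t in (0:ℝ)..1, h t * h t = 0 := by
    refine le_antisymm (le_of_forall_pos_le_add fun ε hε => ?_)
      (intervalIntegral.integral_nonneg zero_le_one fun t _ => mul_self_nonneg _)
    obtain ⟨P, hP⟩ := exists_polynomial_near_of_continuousOn 0 1 h hh (ε / (B + 1)) (by positivity)
    calc ∫ t in (0:ℝ)..1, h t * h t = ∫ t in (0:ℝ)..1, (h t - P.eval t) * h t := by
          simp only [sub_mul]
          rw [intervalIntegral.integral_sub hsq_int (hint P), hpoly, sub_zero]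
      _ ≤ ∫ t in (0:ℝ)..1, ε / (B + 1) * B := by
          refine intervalIntegral.integral_mono_on zero_le_one
            (((hh.sub P.continuous.continuousOn).mul hh).intervalIntegrable_of_Icc zero_le_one)
            intervalIntegrable_const fun t ht => ?_
          refine (le_abs_self _).trans ?_
          rw [abs_mul, abs_sub_comm]
          exact mul_le_mul (hP t ht).le (hB t ht) (abs_nonneg _) (by positivity)
      _ ≤ 0 + ε := by
          rw [intervalIntegral.integral_const, sub_zero, one_smul, zero_add, div_mul_eq_mul_div,
            div_le_iff₀ (by positivity)]
          nlinarith
  rw [intervalIntegral.integral_eq_zero_iff_of_nonneg_ae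
    (Eventually.of_forall fun t => mul_self_nonneg (h t)) hsq_int,
    Ioc_eq_empty (not_lt.mpr zero_le_one), union_empty,
    Measure.restrict_congr_set Ioc_ae_eq_Icc] at hsq
  intro t ht
  exact mul_self_eq_zero.mp
    (Measure.eqOn_Icc_of_ae_eq volume zero_ne_one hsq (hh.mul hh) continuousOn_const ht)

theorem continuousOn_comp_neg_log {g : ℝ → ℝ} (hg : ContinuousOn g (Ici 0))
    (hlim : Tendsto g atTop (𝓝 0)) :
    ContinuousOn (fun t => if t = 0 then 0 else g (-log t)) (Icc 0 1) := by
  have hmaps : MapsTo (fun t => -log t) (Icc 0 1) (Ici 0) := fun t ht =>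
    neg_nonneg.mpr (log_nonpos ht.1 ht.2)
  intro t ht
  rcases ht.1.eq_or_lt with rfl | htpos
  · have hright : Tendsto (fun t => -log t) (𝓝[>] 0) atTop :=
      tendsto_neg_atBot_atTop.comp tendsto_log_nhdsGT_zero
    have hcw : ContinuousWithinAt (fun t => if t = 0 then 0 else g (-log t)) (Ioi 0) 0 := by
      refine ((hlim.comp hright).congr' ?_).trans_eq ?_
      · filter_upwards [self_mem_nhdsWithin] with s hs
        simp [(mem_Ioi.mp hs).ne']
      · simp
    exact (continuousWithinAt_Ioi_iff_Ici.mp hcw).mono Icc_subset_Ici_self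
  · refine ContinuousWithinAt.congr_of_eventuallyEq
      (ContinuousWithinAt.comp (f := fun t => -log t) (hg _ (hmaps ht))
        (continuousAt_log htpos.ne').neg.continuousWithinAt hmaps) ?_ (by simp [htpos.ne'])
    filter_upwards [nhdsWithin_le_nhds (eventually_ne_nhds htpos.ne')] with s hs
    exact if_neg hs

theorem integral_pow_mul_comp_neg_log (g : ℝ → ℝ) (n : ℕ) :
    ∫ t in (0:ℝ)..1, t ^ n * (if t = 0 then 0 else g (-log t)) = laplace g (n + 1) := by
  have himage : (fun x => exp (-x)) '' Ioi 0 = Ioo 0 1 := by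
    ext t
    constructor
    · rintro ⟨x, hx, rfl⟩
      exact ⟨exp_pos _, exp_lt_one_iff.mpr (neg_lt_zero.mpr hx)⟩
    · rintro ⟨ht₀, ht₁⟩
      exact ⟨-log t, neg_pos.mpr (log_neg ht₀ ht₁), by simp [exp_log ht₀]⟩
  have hsubst := integral_image_eq_integral_abs_deriv_smul (measurableSet_Ioi (a := 0))
    (fun x _ => (hasDerivAt_neg x).exp.hasDerivWithinAt)
    (fun x _ y _ hxy => neg_injective (exp_injective hxy))
    (fun t => t ^ n * (if t = 0 then 0 else g (-log t)))
  rw [himage] at hsubst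
  rw [intervalIntegral.integral_of_le zero_le_one, integral_Ioc_eq_integral_Ioo, hsubst, laplace]
  refine setIntegral_congr_fun measurableSet_Ioi fun x _ => ?_
  simp only [smul_eq_mul, mul_neg, mul_one, abs_neg, abs_of_pos (exp_pos _), (exp_pos _).ne',
    if_false, log_exp, neg_neg, ← exp_nat_mul, ← mul_assoc, ← exp_add]
  ring_nf

theorem eqOn_zero_of_laplace_nat_succ_eq_zero {g : ℝ → ℝ} (hg : ContinuousOn g (Ici 0))
    (hlim : Tendsto g atTop (𝓝 0)) (hlap : ∀ n : ℕ, laplace g (n + 1) = 0) :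
    EqOn g 0 (Ici 0) := by
  have hzero := eqOn_zero_of_forall_integral_pow_mul_eq_zero (continuousOn_comp_neg_log hg hlim)
    fun n => (integral_pow_mul_comp_neg_log g n).trans (hlap n)
  intro x hx
  have h := hzero ⟨(exp_pos (-x)).le, exp_le_one_iff.mpr (neg_nonpos.mpr hx)⟩
  simpa [(exp_pos _).ne'] using h

theorem laplace_exp_neg_mul_mul (f : ℝ → ℝ) (c s : ℝ) :
    laplace (fun x => exp (-(c * x)) * f x) s = laplace f (c + s) := by
  refine setIntegral_congr_fun measurableSet_Ioi fun x _ => ?_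
  simp only [← mul_assoc, ← exp_add]
  ring_nf

/-- Lerch's theorem. -/
theorem eqOn_zero_of_laplace_eq_zero {A : ℝ} (hf : ContinuousOn f (Ici 0)) (hb : ExpBounded f)
    (hlap : ∀ s, A < s → laplace f s = 0) : EqOn f 0 (Ici 0) := by
  obtain ⟨K, R, hKR⟩ := hb
  set c := max A R + 1
  have hdecay : Tendsto (fun x => exp (-(c * x)) * f x) atTop (𝓝 0) := by
    have hlim : Tendsto (fun x => K * exp ((R - c) * x)) atTop (𝓝 0) := by
      simpa using (tendsto_exp_atBot.comp
        (tendsto_id.const_mul_atTop_of_neg (by linarith [le_max_right A R]))).const_mul K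
    refine squeeze_zero_norm' ?_ hlim
    filter_upwards [eventually_ge_atTop 0] with x hx
    rw [norm_mul, norm_of_nonneg (exp_pos _).le, Real.norm_eq_abs]
    calc exp (-(c * x)) * |f x| ≤ exp (-(c * x)) * (K * exp (R * x)) := by gcongr; exact hKR x hx
      _ = K * exp ((R - c) * x) := by rw [mul_left_comm, ← exp_add]; ring_nf
  have hzero := eqOn_zero_of_laplace_nat_succ_eq_zero (g := fun x => exp (-(c * x)) * f x)
    ((Continuous.continuousOn (by fun_prop)).mul hf) hdecay fun n => by
      rw [laplace_exp_neg_mul_mul]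
      exact hlap _ (by linarith [le_max_left A R, n.cast_nonneg (α := ℝ)])
  intro x hx
  simpa [(exp_pos _).ne'] using hzero hx

end Laplace

open Laplace in
theorem convolution_identity_general
    (p q φ φ' : ℝ) (hq : 0 ≤ q) (hφφ' : φ ≤ φ')
    (ψ Wp Wpq : ℝ → ℝ)
    (hψ : ∀ l, φ' < l → p + q < ψ l)
    (hWp_cont : ContinuousOn Wp (Set.Ici 0))
    (hWp_nonneg : ∀ x, 0 ≤ x → 0 ≤ Wp x)
    (hWp_mono : MonotoneOn Wp (Set.Ici 0))
    (hWp_neg : ∀ x, x < 0 → Wp x = 0)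
    (hWpq_cont : ContinuousOn Wpq (Set.Ici 0))
    (hWpq_nonneg : ∀ x, 0 ≤ x → 0 ≤ Wpq x)
    (hWpq_mono : MonotoneOn Wpq (Set.Ici 0))
    (hWpq_neg : ∀ x, x < 0 → Wpq x = 0)
    (hWp_int : ∀ l, φ' < l →
      MeasureTheory.IntegrableOn (fun x => Real.exp (-(l * x)) * Wp x) (Set.Ioi 0))
    (hWp_lap : ∀ l, φ' < l →
      ∫ x in Set.Ioi (0:ℝ), Real.exp (-(l * x)) * Wp x = 1 / (ψ l - p))
    (hWpq_int : ∀ l, φ' < l →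
      MeasureTheory.IntegrableOn (fun x => Real.exp (-(l * x)) * Wpq x) (Set.Ioi 0))
    (hWpq_lap : ∀ l, φ' < l →
      ∫ x in Set.Ioi (0:ℝ), Real.exp (-(l * x)) * Wpq x = 1 / (ψ l - (p + q)))
    (H : ℝ → ℝ)
    (hH : ∀ x : ℝ, H x
      = Real.exp (φ * x) * (1 + q * ∫ z in (0:ℝ)..x, Real.exp (-(φ * z)) * Wpq z)) :
    ∀ x : ℝ, ∫ z in (0:ℝ)..x, Wp (x - z) * H z
      = ∫ z in (0:ℝ)..x, Real.exp (φ * (x - z)) * Wpq z := by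
  set E : ℝ → ℝ := fun y => exp (φ * y)
  have hHE : H = fun z => E z + q * conv E Wpq z :=
    funext fun z => by rw [hH, conv_exp_mul]; ring
  have hE_cont : ContinuousOn E (Ici 0) := Continuous.continuousOn (by fun_prop)
  have hH_cont : ContinuousOn H (Ici 0) := by
    rw [hHE]; exact hE_cont.add (continuousOn_const.mul (continuousOn_conv hE_cont hWpq_cont))
  have hm : φ' < max φ' 0 + 1 := by linarith [le_max_left φ' 0]
  have hWp_bdd := ExpBounded.of_monotoneOn (by positivity) hWp_nonneg hWp_mono (hWp_int _ hm)
  have hWpq_bdd := ExpBounded.of_monotoneOn (by positivity) hWpq_nonneg hWpq_mono (hWpq_int _ hm)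
  have hE_bdd := expBounded_exp_mul φ
  have hH_bdd : ExpBounded H := by
    rw [hHE]
    exact hE_bdd.add ((expBounded_conv hE_bdd hWpq_bdd).const_mul q)
  have hlap : ∀ l, φ' < l → laplace (fun x => conv Wp H x - conv E Wpq x) l = 0 := fun l hl => by
    have hE := hasLaplace_exp_mul (hφφ'.trans_lt hl)
    have hG := hasLaplace_conv hE ⟨hWpq_int l hl, hWpq_lap l hl⟩
    have hHl : HasLaplace H l _ := hHE ▸ hE.add (hG.const_mul q)
    rw [((hasLaplace_conv ⟨hWp_int l hl, hWp_lap l hl⟩ hHl).sub hG).2]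
    have hψl := hψ l hl
    have hp' : ψ l - p ≠ 0 := by linarith
    have hpq' : ψ l - (p + q) ≠ 0 := by linarith
    have hlφ : l - φ ≠ 0 := by linarith
    field_simp
    ring
  have hzero := eqOn_zero_of_laplace_eq_zero
    ((continuousOn_conv hWp_cont hH_cont).sub (continuousOn_conv hE_cont hWpq_cont))
    ((expBounded_conv hWp_bdd hH_bdd).sub (expBounded_conv hE_bdd hWpq_bdd)) hlap
  intro x
  change conv Wp H x = conv E Wpq x
  rcases le_or_gt 0 x with hx | hx
  · exact sub_eq_zero.mp (hzero hx)
  · rw [conv_comm, conv_eq_zero_of_nonpos H hWp_neg hx.le, conv_eq_zero_of_nonpos E hWpq_neg hx.le]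

/-- The convolution identity from the beginning of Appendix A of the paper:
∫₀ˣ W^{(p)}(x−z) 𝓗^{(p,q)}(z) dz = ∫₀ˣ e^{Φ(p)(x−z)} W^{(p+q)}(z) dz. -/
theorem convolution_identity
    (p q φ φ' : ℝ) (hp : 0 ≤ p) (hq : 0 ≤ q) (hφφ' : φ ≤ φ')
    (ψ Wp Wpq : ℝ → ℝ)
    (hψ : ∀ l, φ' < l → p + q < ψ l)
    (hWp_cont : ContinuousOn Wp (Set.Ici 0))
    (hWp_nonneg : ∀ x, 0 ≤ x → 0 ≤ Wp x)
    (hWp_mono : MonotoneOn Wp (Set.Ici 0))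
    (hWp_neg : ∀ x, x < 0 → Wp x = 0)
    (hWpq_cont : ContinuousOn Wpq (Set.Ici 0))
    (hWpq_nonneg : ∀ x, 0 ≤ x → 0 ≤ Wpq x)
    (hWpq_mono : MonotoneOn Wpq (Set.Ici 0))
    (hWpq_neg : ∀ x, x < 0 → Wpq x = 0)
    (hWp_int : ∀ l, φ' < l →
      MeasureTheory.IntegrableOn (fun x => Real.exp (-(l * x)) * Wp x) (Set.Ioi 0))
    (hWp_lap : ∀ l, φ' < l →
      ∫ x in Set.Ioi (0:ℝ), Real.exp (-(l * x)) * Wp x = 1 / (ψ l - p))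
    (hWpq_int : ∀ l, φ' < l →
      MeasureTheory.IntegrableOn (fun x => Real.exp (-(l * x)) * Wpq x) (Set.Ioi 0))
    (hWpq_lap : ∀ l, φ' < l →
      ∫ x in Set.Ioi (0:ℝ), Real.exp (-(l * x)) * Wpq x = 1 / (ψ l - (p + q)))
    (H : ℝ → ℝ)
    (hH : ∀ x : ℝ, H x
      = Real.exp (φ * x) * (1 + q * ∫ z in (0:ℝ)..x, Real.exp (-(φ * z)) * Wpq z)) :
    ∀ x : ℝ, ∫ z in (0:ℝ)..x, Wp (x - z) * H z
      = ∫ z in (0:ℝ)..x, Real.exp (φ * (x - z)) * Wpq z :=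
  convolution_identity_general p q φ φ' hq hφφ' ψ Wp Wpq hψ hWp_cont hWp_nonneg hWp_mono hWp_neg
    hWpq_cont hWpq_nonneg hWpq_mono hWpq_neg hWp_int hWp_lap hWpq_int hWpq_lap H hH
end

section
/- For every q > 0, the set {λ ∈ ℝ ∖ {−α₁, …, −αₙ} : ψ(λ) = q} has exactly n + 2 elements θ₁ > θ₂ > ⋯ > θ_{n+2}; every such θᵢ is a simple zero of ψ − q (i.e. ψ′(θᵢ) ≠ 0); and the roots interlace the poles of ψ as θ_{n+2} < −αₙ < θ_{n+1} < −α_{n−1} < θₙ < ⋯ < −α₁ < θ₂ < 0 < θ₁. -/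
/-!
Write `ψ - q` as `F x = a x² + b x + c + ∑ rᵢ / (x - pᵢ)` with `a = σ²/2 > 0`, residues
`rᵢ = η wᵢ αᵢ > 0` and poles `pᵢ = -αᵢ`. Then `F → +∞` at `±∞`, `F → +∞` just right of each
pole, `F → -∞` just left of it, and `F 0 = -q < 0`. By the intermediate value theorem `F`
vanishes on `(0, ∞)` and on each of the `n + 1` intervals into which the poles cut `(-∞, 0)`,
which gives `n + 2` interlacing zeros. Clearing denominators, `F · ∏ (x - pᵢ)` is a nonzero
polynomial of degree at most `n + 2`, so these are all the zeros of `F` and each is simple.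
-/

open Filter Set Topology Polynomial Lagrange Finset

theorem Polynomial.roots_eq_map_of_injective {R : Type*} [CommRing R] [IsDomain R]
    {P : R[X]} {m : ℕ} (hP : P ≠ 0) (hdeg : P.natDegree ≤ m) {θ : Fin m → R}
    (hθ : Function.Injective θ) (hroot : ∀ i, P.IsRoot (θ i)) : P.roots = univ.val.map θ := by
  have hnodup : (univ.val.map θ).Nodup := univ.nodup.map hθ
  refine (Multiset.eq_of_le_of_card_le ((Multiset.le_iff_subset hnodup).2 ?_) ?_).symm
  · intro x hx
    obtain ⟨i, -, rfl⟩ := Multiset.mem_map.1 hx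
    exact (mem_roots hP).2 (hroot i)
  · simpa using (card_roots' P).trans hdeg

theorem Polynomial.eval_derivative_ne_zero_of_injective {R : Type*} [CommRing R] [IsDomain R]
    {P : R[X]} {m : ℕ} (hP : P ≠ 0) (hdeg : P.natDegree ≤ m) {θ : Fin m → R}
    (hθ : Function.Injective θ) (hroot : ∀ i, P.IsRoot (θ i)) (i : Fin m) :
    (derivative P).eval (θ i) ≠ 0 := by
  classical
  have hsimple : P.rootMultiplicity (θ i) = 1 := by
    rw [← count_roots, roots_eq_map_of_injective hP hdeg hθ hroot]
    exact Multiset.count_eq_one_of_mem (univ.nodup.map hθ) (Multiset.mem_map_of_mem _ (mem_univ i))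
  exact fun h => ((one_lt_rootMultiplicity_iff_isRoot hP).2 ⟨hroot i, h⟩).ne' hsimple

section Field

variable {K ι : Type*} [Field K] [Fintype ι] (a b c : K) (r p : ι → K)

def quadPartialFraction (x : K) : K := a * x ^ 2 + b * x + c + ∑ i, r i / (x - p i)

noncomputable def quadPartialFractionNumerator [DecidableEq ι] : K[X] :=
  (C a * X ^ 2 + C b * X + C c) * nodal univ p + ∑ i, C (r i) * nodal (univ.erase i) p

variable {a b c r p}

theorem eval_quadPartialFractionNumerator [DecidableEq ι] {x : K} (hx : ∀ i, x ≠ p i) :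
    (quadPartialFractionNumerator a b c r p).eval x
      = quadPartialFraction a b c r p x * (nodal univ p).eval x := by
  simp only [quadPartialFractionNumerator, quadPartialFraction, eval_add, eval_mul, eval_C,
    eval_X, eval_pow, eval_finsetSum, eval_nodal, add_mul _ (∑ i, _), Finset.sum_mul]
  congr 1
  refine Finset.sum_congr rfl fun i _ => ?_
  rw [← Finset.mul_prod_erase univ _ (mem_univ i)]
  field_simp [sub_ne_zero.2 (hx i)]

theorem natDegree_quadPartialFractionNumerator_le [DecidableEq ι] :
    (quadPartialFractionNumerator a b c r p).natDegree ≤ Fintype.card ι + 2 := by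
  refine (natDegree_add_le _ _).trans (max_le ?_ ?_)
  · refine natDegree_mul_le.trans ?_
    rw [natDegree_nodal, card_univ, add_comm]
    exact Nat.add_le_add_left natDegree_quadratic_le _
  · refine natDegree_sum_le_of_forall_le _ _ fun i _ => (natDegree_C_mul_le _ _).trans ?_
    rw [natDegree_nodal]
    exact (card_le_univ _).trans (Nat.le_add_right _ _)

theorem isRoot_quadPartialFractionNumerator_iff [DecidableEq ι] {x : K} (hx : ∀ i, x ≠ p i) :
    (quadPartialFractionNumerator a b c r p).IsRoot x ↔ quadPartialFraction a b c r p x = 0 := by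
  rw [IsRoot, eval_quadPartialFractionNumerator hx,
    mul_eq_zero_iff_right (eval_nodal_not_at_node fun i _ => hx i)]

theorem quadPartialFractionNumerator_ne_zero [DecidableEq ι] {x₀ : K}
    (hx₀ : ∀ i, x₀ ≠ p i) (hFx₀ : quadPartialFraction a b c r p x₀ ≠ 0) :
    quadPartialFractionNumerator a b c r p ≠ 0 :=
  fun h => hFx₀ ((isRoot_quadPartialFractionNumerator_iff hx₀).1 (by rw [h]; exact eval_zero))

theorem quadPartialFraction_eq_zero_iff_mem_range {x₀ : K} (hx₀ : ∀ i, x₀ ≠ p i)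
    (hFx₀ : quadPartialFraction a b c r p x₀ ≠ 0) {m : ℕ} (hm : Fintype.card ι + 2 ≤ m)
    {θ : Fin m → K} (hθ : Function.Injective θ) (hθ_pole : ∀ k i, θ k ≠ p i)
    (hθ_zero : ∀ k, quadPartialFraction a b c r p (θ k) = 0) {x : K} (hx : ∀ i, x ≠ p i) :
    quadPartialFraction a b c r p x = 0 ↔ x ∈ range θ := by
  classical
  have hP := quadPartialFractionNumerator_ne_zero hx₀ hFx₀
  rw [← isRoot_quadPartialFractionNumerator_iff hx, ← mem_roots hP,
    roots_eq_map_of_injective hP (natDegree_quadPartialFractionNumerator_le.trans hm) hθ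
      fun k => (isRoot_quadPartialFractionNumerator_iff (hθ_pole k)).2 (hθ_zero k)]
  simp

end Field

section Normed

variable {𝕜 ι : Type*} [NontriviallyNormedField 𝕜] [Fintype ι] {a b c : 𝕜}
  {r p : ι → 𝕜}

theorem differentiableAt_quadPartialFraction {x : 𝕜} (hx : ∀ i, x ≠ p i) :
    DifferentiableAt 𝕜 (quadPartialFraction a b c r p) x := by
  unfold quadPartialFraction
  have := fun i => sub_ne_zero.2 (hx i)
  fun_prop (disch := exact this _)

theorem deriv_quadPartialFraction_mul_eval_nodal [DecidableEq ι] {x : 𝕜} (hx : ∀ i, x ≠ p i)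
    (hFx : quadPartialFraction a b c r p x = 0) :
    deriv (quadPartialFraction a b c r p) x * (nodal univ p).eval x
      = (derivative (quadPartialFractionNumerator a b c r p)).eval x := by
  have hloc : (fun y => quadPartialFraction a b c r p y * (nodal univ p).eval y)
      =ᶠ[𝓝 x] fun y => (quadPartialFractionNumerator a b c r p).eval y :=
    (eventually_all.2 fun i => eventually_ne_nhds (hx i)).mono fun y hy =>
      (eval_quadPartialFractionNumerator hy).symm
  have hprod := ((differentiableAt_quadPartialFraction hx).hasDerivAt.mul
    ((nodal univ p).hasDerivAt x)).congr_of_eventuallyEq hloc.symm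
  rw [((quadPartialFractionNumerator a b c r p).hasDerivAt x).unique hprod, hFx, zero_mul,
    add_zero]

theorem deriv_quadPartialFraction_ne_zero {x₀ : 𝕜} (hx₀ : ∀ i, x₀ ≠ p i)
    (hFx₀ : quadPartialFraction a b c r p x₀ ≠ 0) {m : ℕ} (hm : Fintype.card ι + 2 ≤ m)
    {θ : Fin m → 𝕜} (hθ : Function.Injective θ) (hθ_pole : ∀ k i, θ k ≠ p i)
    (hθ_zero : ∀ k, quadPartialFraction a b c r p (θ k) = 0) (k : Fin m) :
    deriv (quadPartialFraction a b c r p) (θ k) ≠ 0 := by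
  classical
  refine fun h => eval_derivative_ne_zero_of_injective
    (quadPartialFractionNumerator_ne_zero hx₀ hFx₀)
    (natDegree_quadPartialFractionNumerator_le.trans hm) hθ
    (fun k => (isRoot_quadPartialFractionNumerator_iff (hθ_pole k)).2 (hθ_zero k)) k ?_
  rw [← deriv_quadPartialFraction_mul_eval_nodal (hθ_pole k) (hθ_zero k), h, zero_mul]

end Normed

section Real

variable {ι : Type*} [Fintype ι] {a b c : ℝ} {r p : ι → ℝ}

theorem continuousOn_quadPartialFraction {s : Set ℝ} (hs : ∀ x ∈ s, ∀ i, x ≠ p i) :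
    ContinuousOn (quadPartialFraction a b c r p) s := fun x hx =>
  (differentiableAt_quadPartialFraction (hs x hx)).continuousAt.continuousWithinAt

theorem tendsto_quadPartialFraction_atTop (ha : 0 < a) :
    Tendsto (quadPartialFraction a b c r p) atTop atTop := by
  have hquad : Tendsto (fun x => x * (a * x + b) + c) atTop atTop :=
    tendsto_atTop_add_const_right _ c <| tendsto_id.atTop_mul_atTop₀ <|
      tendsto_atTop_add_const_right _ b (tendsto_id.const_mul_atTop ha)
  have hfrac : Tendsto (fun x => ∑ i, r i / (x - p i)) atTop (𝓝 0) := by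
    simpa [sub_eq_add_neg] using tendsto_finsetSum univ fun i _ =>
      tendsto_const_nhds.div_atTop (tendsto_atTop_add_const_right _ (-p i) tendsto_id)
  refine (hquad.atTop_add hfrac).congr fun x => ?_
  simp only [quadPartialFraction]
  ring

theorem tendsto_quadPartialFraction_atBot (ha : 0 < a) :
    Tendsto (quadPartialFraction a b c r p) atBot atTop := by
  have hquad : Tendsto (fun x => x * (a * x + b) + c) atBot atTop :=
    tendsto_atTop_add_const_right _ c <| tendsto_id.atBot_mul_atBot₀ <|
      tendsto_atBot_add_const_right _ b (tendsto_id.const_mul_atBot ha)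
  have hfrac : Tendsto (fun x => ∑ i, r i / (x - p i)) atBot (𝓝 0) := by
    simpa [sub_eq_add_neg] using tendsto_finsetSum univ fun i _ =>
      tendsto_const_nhds.div_atBot (tendsto_atBot_add_const_right _ (-p i) tendsto_id)
  refine (hquad.atTop_add hfrac).congr fun x => ?_
  simp only [quadPartialFraction]
  ring

theorem exists_tendsto_quadPartialFraction_sub_div (hp : Function.Injective p) (i : ι) :
    ∃ L, Tendsto (fun x => quadPartialFraction a b c r p x - r i / (x - p i)) (𝓝 (p i))
      (𝓝 L) := by
  classical
  have hquad : ContinuousAt (fun x : ℝ => a * x ^ 2 + b * x + c) (p i) := by fun_prop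
  have hrest : ContinuousAt (fun x => ∑ j ∈ univ.erase i, r j / (x - p j)) (p i) :=
    tendsto_finsetSum _ fun j hj => continuousAt_const.div (continuousAt_id.sub continuousAt_const)
      (sub_ne_zero.2 (hp.ne (ne_of_mem_erase hj).symm))
  refine ⟨_, (hquad.add hrest).tendsto.congr fun x => ?_⟩
  rw [Pi.add_apply, quadPartialFraction, ← add_sum_erase _ _ (mem_univ i)]
  ring

theorem tendsto_quadPartialFraction_nhdsGT_pole (hr : ∀ i, 0 < r i) (hp : Function.Injective p)
    (i : ι) : Tendsto (quadPartialFraction a b c r p) (𝓝[>] (p i)) atTop := by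
  obtain ⟨L, hL⟩ :=
    exists_tendsto_quadPartialFraction_sub_div (a := a) (b := b) (c := c) (r := r) hp i
  have hsub : Tendsto (fun x => x - p i) (𝓝[>] (p i)) (𝓝[>] 0) :=
    ((continuous_sub_right (p i)).tendsto' _ _ (sub_self _)).inf
      (tendsto_principal_principal.2 fun _ hx => mem_Ioi.2 (sub_pos.2 hx))
  refine ((hL.mono_left nhdsWithin_le_nhds).add_atTop
    (hsub.inv_tendsto_nhdsGT_zero.const_mul_atTop (hr i))).congr fun x => ?_
  simp [div_eq_mul_inv]

theorem tendsto_quadPartialFraction_nhdsLT_pole (hr : ∀ i, 0 < r i) (hp : Function.Injective p)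
    (i : ι) : Tendsto (quadPartialFraction a b c r p) (𝓝[<] (p i)) atBot := by
  obtain ⟨L, hL⟩ :=
    exists_tendsto_quadPartialFraction_sub_div (a := a) (b := b) (c := c) (r := r) hp i
  have hsub : Tendsto (fun x => x - p i) (𝓝[<] (p i)) (𝓝[<] 0) :=
    ((continuous_sub_right (p i)).tendsto' _ _ (sub_self _)).inf
      (tendsto_principal_principal.2 fun _ hx => mem_Iio.2 (sub_neg.2 hx))
  refine ((hL.mono_left nhdsWithin_le_nhds).add_atBot
    (hsub.inv_tendsto_nhdsLT_zero.const_mul_atBot (hr i))).congr fun x => ?_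
  simp [div_eq_mul_inv]

end Real

section Gap

variable {n : ℕ} {p : Fin n → ℝ} {k : Fin (n + 1)} {x : ℝ}

/-- The `k`-th of the `n + 1` intervals into which the poles `p 0 > ⋯ > p (n - 1)` cut
`(-∞, 0)`: `(p 0, 0)`, then `(p k, p (k - 1))`, and finally `(-∞, p (n - 1))`. -/
def poleGap (p : Fin n → ℝ) (k : Fin (n + 1)) : Set ℝ :=
  {x | x < 0 ∧ ∀ j, (j.castSucc < k → x < p j) ∧ (k ≤ j.castSucc → p j < x)}

theorem ordConnected_poleGap : (poleGap p k).OrdConnected := by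
  refine ⟨fun x hx y hy z hz => ⟨hz.2.trans_lt hy.1, fun j => ⟨fun hj => ?_, fun hj => ?_⟩⟩⟩
  exacts [hz.2.trans_lt ((hy.2 j).1 hj), ((hx.2 j).2 hj).trans_le hz.1]

theorem ne_of_mem_poleGap (hx : x ∈ poleGap p k) (j : Fin n) : x ≠ p j := by
  rcases lt_or_ge j.castSucc k with hj | hj
  · exact ((hx.2 j).1 hj).ne
  · exact ((hx.2 j).2 hj).ne'

theorem lt_of_mem_poleGap_succ {j : Fin n} (hx : x ∈ poleGap p j.succ) : x < p j :=
  (hx.2 j).1 Fin.castSucc_lt_succ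

theorem lt_of_mem_poleGap_castSucc {j : Fin n} (hx : x ∈ poleGap p j.castSucc) : p j < x :=
  (hx.2 j).2 le_rfl

theorem poleGap_mem {l : Filter ℝ} (hneg : ∀ᶠ x in l, x < 0)
    (hlt : ∀ j : Fin n, j.castSucc < k → ∀ᶠ x in l, x < p j)
    (hgt : ∀ j : Fin n, k ≤ j.castSucc → ∀ᶠ x in l, p j < x) : poleGap p k ∈ l := by
  filter_upwards [hneg, eventually_all.2 fun j => eventually_imp_distrib_left.2 (hlt j),
    eventually_all.2 fun j => eventually_imp_distrib_left.2 (hgt j)] with x h₀ h₁ h₂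
  exact ⟨h₀, fun j => ⟨h₁ j, h₂ j⟩⟩

theorem poleGap_last_mem_atBot : poleGap p (Fin.last n) ∈ atBot :=
  poleGap_mem (eventually_lt_atBot 0) (fun j _ => eventually_lt_atBot (p j))
    fun j hj => absurd hj (Fin.castSucc_lt_last j).not_ge

variable (hp : StrictAnti p) (hp_neg : ∀ j, p j < 0)
include hp_neg

theorem poleGap_zero_mem_nhdsLT : poleGap p 0 ∈ 𝓝[<] 0 :=
  poleGap_mem self_mem_nhdsWithin (fun _ hj => absurd hj (Fin.not_lt_zero _))
    fun j _ => nhdsWithin_le_nhds (eventually_gt_nhds (hp_neg j))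

include hp

theorem poleGap_succ_mem_nhdsLT (j : Fin n) : poleGap p j.succ ∈ 𝓝[<] (p j) :=
  poleGap_mem (nhdsWithin_le_nhds (eventually_lt_nhds (hp_neg j)))
    (fun _ hi => eventually_mem_nhdsWithin.mono fun _ hx =>
      hx.trans_le (hp.antitone (Fin.castSucc_lt_succ_iff.1 hi)))
    fun _ hi => nhdsWithin_le_nhds (eventually_gt_nhds (hp (Fin.succ_le_castSucc_iff.1 hi)))

theorem poleGap_castSucc_mem_nhdsGT (j : Fin n) : poleGap p j.castSucc ∈ 𝓝[>] (p j) :=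
  poleGap_mem (nhdsWithin_le_nhds (eventually_lt_nhds (hp_neg j)))
    (fun _ hi => nhdsWithin_le_nhds (eventually_lt_nhds (hp (Fin.castSucc_lt_castSucc_iff.1 hi))))
    fun _ hi => eventually_mem_nhdsWithin.mono fun _ hx =>
      (hp.antitone (Fin.castSucc_le_castSucc_iff.1 hi)).trans_lt hx

end Gap

section Roots

variable {n : ℕ} {a b c : ℝ} {r p : Fin n → ℝ}

local notation "F" => quadPartialFraction a b c r p

theorem exists_mem_poleGap_quadPartialFraction_neg (hr : ∀ i, 0 < r i) (hp : StrictAnti p)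
    (hp_neg : ∀ j, p j < 0) (hF0 : F 0 < 0) (k : Fin (n + 1)) :
    ∃ x ∈ poleGap p k, F x < 0 := by
  induction k using Fin.cases with
  | zero =>
    have hcont : ContinuousAt F 0 :=
      (differentiableAt_quadPartialFraction fun j => (hp_neg j).ne').continuousAt
    have hneg : ∀ᶠ x in 𝓝[<] 0, F x < 0 :=
      eventually_nhdsWithin_of_eventually_nhds (hcont.eventually (eventually_lt_nhds hF0))
    exact (hneg.and (poleGap_zero_mem_nhdsLT hp_neg)).exists.imp fun _ h => ⟨h.2, h.1⟩
  | succ j =>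
    exact (((tendsto_quadPartialFraction_nhdsLT_pole hr hp.injective j).eventually
      (eventually_lt_atBot 0)).and (poleGap_succ_mem_nhdsLT hp hp_neg j)).exists.imp
      fun _ h => ⟨h.2, h.1⟩

theorem exists_mem_poleGap_quadPartialFraction_pos (ha : 0 < a) (hr : ∀ i, 0 < r i)
    (hp : StrictAnti p) (hp_neg : ∀ j, p j < 0) (k : Fin (n + 1)) :
    ∃ x ∈ poleGap p k, 0 < F x := by
  induction k using Fin.lastCases with
  | last =>
    exact (((tendsto_quadPartialFraction_atBot ha).eventually (eventually_gt_atTop 0)).and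
      poleGap_last_mem_atBot).exists.imp fun _ h => ⟨h.2, h.1⟩
  | cast j =>
    exact (((tendsto_quadPartialFraction_nhdsGT_pole hr hp.injective j).eventually
      (eventually_gt_atTop 0)).and (poleGap_castSucc_mem_nhdsGT hp hp_neg j)).exists.imp
      fun _ h => ⟨h.2, h.1⟩

theorem exists_mem_poleGap_quadPartialFraction_eq_zero (ha : 0 < a) (hr : ∀ i, 0 < r i)
    (hp : StrictAnti p) (hp_neg : ∀ j, p j < 0) (hF0 : F 0 < 0) (k : Fin (n + 1)) :
    ∃ x ∈ poleGap p k, F x = 0 := by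
  obtain ⟨u, hu, hFu⟩ := exists_mem_poleGap_quadPartialFraction_pos ha hr hp hp_neg k
  obtain ⟨v, hv, hFv⟩ := exists_mem_poleGap_quadPartialFraction_neg hr hp hp_neg hF0 k
  exact ordConnected_poleGap.isPreconnected.intermediate_value hv hu
    (continuousOn_quadPartialFraction fun _ hx => ne_of_mem_poleGap hx) ⟨hFv.le, hFu.le⟩

theorem exists_pos_quadPartialFraction_eq_zero (ha : 0 < a) (hp_neg : ∀ j, p j < 0)
    (hF0 : F 0 < 0) : ∃ x, 0 < x ∧ F x = 0 := by
  obtain ⟨x, hx, hFx⟩ := isPreconnected_Ici.intermediate_value_Ici self_mem_Ici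
    (le_principal_iff.2 (Ici_mem_atTop 0))
    (continuousOn_quadPartialFraction fun x hx j => ((hp_neg j).trans_le hx).ne')
    (tendsto_quadPartialFraction_atTop ha) (mem_Ici.2 hF0.le)
  exact ⟨x, (mem_Ici.1 hx).lt_of_ne (by rintro rfl; exact hF0.ne hFx), hFx⟩

theorem quadPartialFraction_zeros_interlace_poles (ha : 0 < a) (hr : ∀ i, 0 < r i)
    (hp : StrictAnti p) (hp_neg : ∀ j, p j < 0) (hF0 : F 0 < 0) :
    ∃ θ : Fin (n + 2) → ℝ, StrictAnti θ ∧
      {x | (∀ j, x ≠ p j) ∧ F x = 0} = range θ ∧ (∀ i, deriv F (θ i) ≠ 0) ∧ 0 < θ 0 ∧ θ 1 < 0 ∧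
      ∀ i : Fin n, θ i.succ.succ < p i ∧ p i < θ i.succ.castSucc := by
  classical
  obtain ⟨θ₀, hθ₀, hFθ₀⟩ := exists_pos_quadPartialFraction_eq_zero ha hp_neg hF0
  choose y hy hFy using exists_mem_poleGap_quadPartialFraction_eq_zero ha hr hp hp_neg hF0
  have hy_anti : StrictAnti y := Fin.strictAnti_iff_succ_lt.2 fun i =>
    (lt_of_mem_poleGap_succ (hy i.succ)).trans (lt_of_mem_poleGap_castSucc (hy i.castSucc))
  set θ : Fin (n + 2) → ℝ := Matrix.vecCons θ₀ y
  have hθ_anti : StrictAnti θ := hy_anti.vecCons ((hy 0).1.trans hθ₀)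
  have hθ_pole : ∀ i j, θ i ≠ p j :=
    Fin.cases (fun j => ((hp_neg j).trans hθ₀).ne') fun k => ne_of_mem_poleGap (hy k)
  have hθ_zero : ∀ i, F (θ i) = 0 := Fin.cases hFθ₀ hFy
  have h0_pole : ∀ j, (0 : ℝ) ≠ p j := fun j => (hp_neg j).ne'
  refine ⟨θ, hθ_anti, ?_, deriv_quadPartialFraction_ne_zero h0_pole hF0.ne (by simp)
    hθ_anti.injective hθ_pole hθ_zero, hθ₀, (hy 0).1, fun i =>
    ⟨lt_of_mem_poleGap_succ (hy i.succ), lt_of_mem_poleGap_castSucc (hy i.castSucc)⟩⟩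
  refine Subset.antisymm (fun x ⟨hx, hFx⟩ => ?_)
    (range_subset_iff.2 fun i => ⟨hθ_pole i, hθ_zero i⟩)
  exact (quadPartialFraction_eq_zero_iff_mem_range h0_pole hF0.ne (by simp) hθ_anti.injective
    hθ_pole hθ_zero hx).1 hFx

end Roots

theorem hyperexp_roots_sigma_pos_general
    (n : ℕ)
    (α w : Fin n → ℝ)
    (hα_pos : ∀ i, 0 < α i) (hα_mono : StrictMono α)
    (hw_pos : ∀ i, 0 < w i) (hw_sum : ∑ i, w i = 1)
    (η : ℝ) (hη : 0 < η) (c σ : ℝ) (hσ : 0 < σ)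
    (ψ : ℝ → ℝ)
    (hψ : ∀ l : ℝ, ψ l
      = c * l + σ ^ 2 / 2 * l ^ 2 + η * ((∑ i, w i * α i / (l + α i)) - 1)) :
    ∀ q : ℝ, 0 < q → ∃ θ : Fin (n + 2) → ℝ,
      StrictAnti θ ∧
      {l : ℝ | (∀ j, l ≠ -α j) ∧ ψ l = q} = Set.range θ ∧
      (∀ i, deriv ψ (θ i) ≠ 0) ∧
      0 < θ 0 ∧ θ 1 < 0 ∧
      (∀ i : Fin n, θ i.succ.succ < -α i ∧ -α i < θ i.succ.castSucc) := by
  intro q hq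
  set F :=
    quadPartialFraction (σ ^ 2 / 2) c (-(η + q)) (fun i => η * (w i * α i)) (fun i => -α i)
  have hψF : ψ = fun l => F l + q := funext fun l => by
    simp only [hψ, F, quadPartialFraction, sub_neg_eq_add, mul_sub, mul_sum, mul_div_assoc]
    ring
  have hF0 : F 0 = -q := by
    have hres : ∀ i, η * (w i * α i) / (0 - -α i) = η * w i := fun i => by
      rw [zero_sub, neg_neg, mul_div_assoc, mul_div_cancel_right₀ _ (hα_pos i).ne']
    simp only [F, quadPartialFraction, hres, ← mul_sum, hw_sum]
    ring
  obtain ⟨θ, hθ_anti, hθ_range, hθ_deriv, hθ₀, hθ₁, hθ_interlace⟩ :=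
    quadPartialFraction_zeros_interlace_poles (by positivity)
      (fun i => mul_pos hη (mul_pos (hw_pos i) (hα_pos i)))
      hα_mono.neg (fun j => neg_neg_of_pos (hα_pos j)) (hF0.trans_lt (neg_neg_of_pos hq))
  refine ⟨θ, hθ_anti, ?_, fun i => ?_, hθ₀, hθ₁, hθ_interlace⟩
  · simpa only [hψF, add_eq_right] using hθ_range
  · rw [hψF, deriv_add_const]
    exact hθ_deriv i

/-- For the hyper-exponential jump-diffusion with σ > 0, for every q > 0 the equation
ψ(λ) = q has exactly n+2 solutions θ₁ > ⋯ > θ_{n+2} (away from the poles −αᵢ), all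
simple zeros of ψ − q, interlacing the poles:
θ_{n+2} < −αₙ < θ_{n+1} < −α_{n−1} < ⋯ < −α₁ < θ₂ < 0 < θ₁. -/
theorem hyperexp_roots_sigma_pos
    (n : ℕ) (hn : 1 ≤ n)
    (α w : Fin n → ℝ)
    (hα_pos : ∀ i, 0 < α i) (hα_mono : StrictMono α)
    (hw_pos : ∀ i, 0 < w i) (hw_sum : ∑ i, w i = 1)
    (η : ℝ) (hη : 0 < η) (c σ : ℝ) (hσ : 0 < σ)
    (ψ : ℝ → ℝ)
    (hψ : ∀ l : ℝ, ψ l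
      = c * l + σ ^ 2 / 2 * l ^ 2 + η * ((∑ i, w i * α i / (l + α i)) - 1)) :
    ∀ q : ℝ, 0 < q → ∃ θ : Fin (n + 2) → ℝ,
      StrictAnti θ ∧
      {l : ℝ | (∀ j, l ≠ -α j) ∧ ψ l = q} = Set.range θ ∧
      (∀ i, deriv ψ (θ i) ≠ 0) ∧
      0 < θ 0 ∧ θ 1 < 0 ∧
      (∀ i : Fin n, θ i.succ.succ < -α i ∧ -α i < θ i.succ.castSucc) :=
  hyperexp_roots_sigma_pos_general n α w hα_pos hα_mono hw_pos hw_sum η hη c σ hσ ψ hψ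
end

section
/- For every q > 0, the set {λ ∈ ℝ ∖ {−α₁, …, −αₙ} : ψ(λ) = q} has exactly n + 1 elements θ₁ > θ₂ > ⋯ > θ_{n+1}; every such θᵢ is a simple zero of ψ − q (i.e. ψ′(θᵢ) ≠ 0); and the roots interlace the poles of ψ as −αₙ < θ_{n+1} < −α_{n−1} < θₙ < ⋯ < −α₁ < θ₂ < 0 < θ₁. -/
/-!
Clearing denominators, `ψ λ = q` off the poles exactly when `λ` is a root of the degree `n + 1`
polynomial `P λ = (ψ λ - q) ∏ⱼ (λ + αⱼ)` (`levelNumerator`). `P` is positive for large `λ`, equals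
`-q ∏ⱼ αⱼ < 0` at `0`, and at the pole `-αₖ` equals `η wₖ αₖ ∏_{j ≠ k} (αⱼ - αₖ)`, whose sign is
`(-1)^k`. So `P` alternates in sign along `M > 0 > -α₁ > ⋯ > -αₙ` and the intermediate value
theorem yields one root in each of the `n + 1` gaps. Having degree `n + 1`, `P` has no other roots
and they are all simple; since `ψ = P / ∏ⱼ (λ + αⱼ) + q` near each root, `ψ'` does not vanish there.
-/

open Finset Polynomial

theorem Finset.sum_div_mul_prod {ι K : Type*} [DecidableEq ι] [Field K] (s : Finset ι)
    (f d : ι → K) (hd : ∀ i ∈ s, d i ≠ 0) :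
    (∑ i ∈ s, f i / d i) * ∏ j ∈ s, d j = ∑ i ∈ s, f i * ∏ j ∈ s.erase i, d j := by
  rw [sum_mul]
  refine sum_congr rfl fun i hi => ?_
  rw [← mul_prod_erase s d hi, ← mul_assoc, div_mul_cancel₀ _ (hd i hi)]

theorem neg_one_pow_mul_prod_erase_sub_pos {K : Type*} [Field K] [LinearOrder K]
    [IsStrictOrderedRing K] {n : ℕ} {α : Fin n → K} (hα : StrictMono α) (k : Fin n) :
    0 < (-1) ^ (k : ℕ) * ∏ j ∈ univ.erase k, (α j - α k) := by
  have hsplit : (univ.erase k : Finset (Fin n)) = Iio k ∪ Ioi k := by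
    ext j
    simp only [mem_erase, mem_univ, and_true, mem_union, mem_Iio, mem_Ioi]
    exact ne_iff_lt_or_gt
  have hbelow : ∏ j ∈ Iio k, (α j - α k) = (-1) ^ (k : ℕ) * ∏ j ∈ Iio k, (α k - α j) := by
    rw [← Fin.card_Iio k, ← prod_neg]
    simp
  rw [hsplit, prod_union (disjoint_left.2 fun j hj hj' => lt_asymm (mem_Iio.1 hj) (mem_Ioi.1 hj')),
    hbelow, ← mul_assoc, ← mul_assoc, ← pow_add, Even.neg_one_pow ⟨_, rfl⟩, one_mul]
  exact mul_pos (prod_pos fun j hj => sub_pos.2 (hα (mem_Iio.1 hj)))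
    (prod_pos fun j hj => sub_pos.2 (hα (mem_Ioi.1 hj)))

theorem exists_strictAnti_zeros_of_alternating_sign {m : ℕ} {f : ℝ → ℝ} (hf : Continuous f)
    {e : Fin (m + 1) → ℝ} (he : StrictAnti e)
    (hsign : ∀ k : Fin (m + 1), 0 < (-1) ^ (k : ℕ) * f (e k)) :
    ∃ θ : Fin m → ℝ, StrictAnti θ ∧ (∀ i, θ i ∈ Set.Ioo (e i.succ) (e i.castSucc)) ∧
      ∀ i, f (θ i) = 0 := by
  have hzero : ∀ i : Fin m, ∃ x ∈ Set.Ioo (e i.succ) (e i.castSucc), f x = 0 := by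
    intro i
    have hsucc := hsign i.succ
    have hcast := hsign i.castSucc
    rw [Fin.val_succ, pow_succ] at hsucc
    rw [Fin.val_castSucc] at hcast
    obtain ⟨x, hx, hgx⟩ := intermediate_value_Ioo (Fin.strictAnti_iff_succ_lt.1 he i).le
      (f := fun x => (-1) ^ (i : ℕ) * f x) (by fun_prop)
      (show (0 : ℝ) ∈ Set.Ioo _ _ from ⟨by linarith, hcast⟩)
    exact ⟨x, hx, by simpa using hgx⟩
  choose θ hθ hfθ using hzero
  refine ⟨θ, fun i j hij => ?_, hθ, hfθ⟩
  calc θ j < e j.castSucc := (hθ j).2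
    _ ≤ e i.succ := he.antitone (Fin.succ_le_castSucc_iff.2 hij)
    _ < θ i := (hθ i).1

namespace Polynomial

theorem roots_eq_map_of_isRoot {R : Type*} [CommRing R] [IsDomain R] {p : R[X]} {m : ℕ}
    (hp : p ≠ 0) (hdeg : p.natDegree ≤ m) {θ : Fin m → R} (hθ : Function.Injective θ)
    (hroot : ∀ i, p.IsRoot (θ i)) : p.roots = univ.val.map θ := by
  have := roots_eq_of_natDegree_le_card_of_ne_zero (S := univ.map ⟨θ, hθ⟩) ?_ ?_ hp
  · simpa using this
  · simpa using hroot
  · simpa using hdeg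

theorem eval_derivative_ne_zero_of_nodup_roots {R : Type*} [CommRing R] [IsDomain R]
    {p : R[X]} (hp : p ≠ 0) (hnodup : p.roots.Nodup) {x : R} (hx : p.IsRoot x) :
    p.derivative.eval x ≠ 0 := by
  classical
  have hsimple : p.rootMultiplicity x = 1 := by
    rw [← count_roots]
    exact Multiset.count_eq_one_of_mem hnodup ((mem_roots hp).2 hx)
  intro hx'
  have := (one_lt_rootMultiplicity_iff_isRoot hp).2 ⟨hx, hx'⟩
  omega

end Polynomial

theorem HasDerivAt.div_of_eq_zero {𝕜 : Type*} [NontriviallyNormedField 𝕜] {f g : 𝕜 → 𝕜}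
    {f' g' x : 𝕜} (hf : HasDerivAt f f' x) (hg : HasDerivAt g g' x) (hfx : f x = 0)
    (hgx : g x ≠ 0) : HasDerivAt (f / g) (f' / g x) x := by
  have h := hf.div hg hgx
  rwa [hfx, zero_mul, sub_zero, sq, mul_div_mul_right _ _ hgx] at h

section HyperexponentialLaplaceExponent

variable {n : ℕ} (α w : Fin n → ℝ) (η c q : ℝ)

noncomputable def hyperexpLaplaceExponent (l : ℝ) : ℝ :=
  c * l + η * ((∑ i, w i * α i / (l + α i)) - 1)

noncomputable def polePolynomial : ℝ[X] := ∏ j, (X + C (α j))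

noncomputable def levelNumerator : ℝ[X] :=
  (C c * X - C (q + η)) * polePolynomial α
    + C η * ∑ i, C (w i * α i) * ∏ j ∈ univ.erase i, (X + C (α j))

theorem eval_polePolynomial (l : ℝ) : (polePolynomial α).eval l = ∏ j, (l + α j) := by
  simp [polePolynomial, eval_prod]

theorem eval_levelNumerator (l : ℝ) :
    (levelNumerator α w η c q).eval l = (c * l - (q + η)) * ∏ j, (l + α j)
      + η * ∑ i, w i * α i * ∏ j ∈ univ.erase i, (l + α j) := by
  simp [levelNumerator, polePolynomial, eval_prod, eval_finsetSum]

theorem eval_polePolynomial_ne_zero_iff {l : ℝ} :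
    (polePolynomial α).eval l ≠ 0 ↔ ∀ j, l ≠ -α j := by
  simp [eval_polePolynomial, prod_ne_zero_iff, add_eq_zero_iff_eq_neg]

theorem eval_levelNumerator_eq_mul {l : ℝ} (hl : ∀ j, l ≠ -α j) :
    (levelNumerator α w η c q).eval l
      = (hyperexpLaplaceExponent α w η c l - q) * (polePolynomial α).eval l := by
  rw [eval_levelNumerator, eval_polePolynomial, hyperexpLaplaceExponent,
    ← sum_div_mul_prod _ _ _ fun j _ h => hl j (eq_neg_of_add_eq_zero_left h)]
  ring

theorem eval_levelNumerator_zero (hw : ∑ i, w i = 1) :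
    (levelNumerator α w η c q).eval 0 = -q * ∏ j, α j := by
  have hsum : ∑ i, w i * α i * ∏ j ∈ univ.erase i, α j = ∏ j, α j := by
    simp_rw [mul_assoc, mul_prod_erase _ _ (mem_univ _), ← sum_mul, hw, one_mul]
  simp only [eval_levelNumerator, zero_add, hsum]
  ring

theorem eval_levelNumerator_neg (k : Fin n) :
    (levelNumerator α w η c q).eval (-α k)
      = η * (w k * α k) * ∏ j ∈ univ.erase k, (α j - α k) := by
  classical
  have hk : ∀ s : Finset (Fin n), k ∈ s → ∏ j ∈ s, (-α k + α j) = 0 :=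
    fun s hs => prod_eq_zero hs (neg_add_cancel _)
  rw [eval_levelNumerator, hk _ (mem_univ k), sum_eq_single k
    (fun i _ hik => by rw [hk _ (mem_erase.2 ⟨Ne.symm hik, mem_univ k⟩), mul_zero])
    (fun h => absurd (mem_univ k) h)]
  simp_rw [neg_add_eq_sub]
  ring

theorem natDegree_levelNumerator_le : (levelNumerator α w η c q).natDegree ≤ n + 1 := by
  have hprod : ∀ s : Finset (Fin n), (∏ j ∈ s, (X + C (α j))).natDegree = #s := fun s => by
    rw [natDegree_prod_of_monic _ _ fun j _ => monic_X_add_C (α j)]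
    simp
  refine natDegree_add_le_of_degree_le ?_ ?_
  · refine natDegree_mul_le.trans ?_
    rw [polePolynomial, hprod, card_univ, Fintype.card_fin, add_comm]
    gcongr
    compute_degree
  · refine (natDegree_C_mul_le _ _).trans (natDegree_sum_le_of_forall_le _ _ fun i _ => ?_)
    refine (natDegree_C_mul_le _ _).trans ?_
    rw [hprod, card_erase_of_mem (mem_univ i), card_univ, Fintype.card_fin]
    omega

variable {α w η c q}

theorem exists_pos_eval_levelNumerator_pos (hα : ∀ i, 0 < α i) (hw : ∀ i, 0 < w i)
    (hη : 0 < η) (hc : 0 < c) :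
    ∃ M, 0 < M ∧ 0 < (levelNumerator α w η c q).eval M := by
  obtain ⟨M, hM, hcM⟩ : ∃ M, 0 < M ∧ 0 < c * M - (q + η) := by
    refine ⟨|q + η| / c + 1, by positivity, ?_⟩
    rw [mul_add, mul_div_cancel₀ _ hc.ne', mul_one]
    linarith [le_abs_self (q + η)]
  have hfactor : ∀ j, 0 < M + α j := fun j => add_pos hM (hα j)
  refine ⟨M, hM, ?_⟩
  rw [eval_levelNumerator]
  exact add_pos_of_pos_of_nonneg (mul_pos hcM (prod_pos fun j _ => hfactor j))
    (mul_nonneg hη.le (sum_nonneg fun i _ =>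
      (mul_pos (mul_pos (hw i) (hα i)) (prod_pos fun j _ => hfactor j)).le))

theorem neg_one_pow_mul_eval_levelNumerator_neg_pos (hα : ∀ i, 0 < α i) (hα_mono : StrictMono α)
    (hw : ∀ i, 0 < w i) (hη : 0 < η) (k : Fin n) :
    0 < (-1) ^ (k : ℕ) * (levelNumerator α w η c q).eval (-α k) := by
  rw [eval_levelNumerator_neg, mul_left_comm]
  exact mul_pos (mul_pos hη (mul_pos (hw k) (hα k)))
    (neg_one_pow_mul_prod_erase_sub_pos hα_mono k)

theorem exists_alternating_sign_levelNumerator (hα : ∀ i, 0 < α i) (hα_mono : StrictMono α)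
    (hw : ∀ i, 0 < w i) (hw_sum : ∑ i, w i = 1) (hη : 0 < η) (hc : 0 < c) (hq : 0 < q) :
    ∃ M, 0 < M ∧ ∀ k : Fin (n + 2), 0 < (-1) ^ (k : ℕ)
      * (levelNumerator α w η c q).eval (Matrix.vecCons M (Matrix.vecCons 0 fun j => -α j) k) := by
  obtain ⟨M, hM, hPM⟩ := exists_pos_eval_levelNumerator_pos (q := q) hα hw hη hc
  refine ⟨M, hM, Fin.cases (by simpa using hPM) (Fin.cases ?_ fun k => ?_)⟩
  · simpa [eval_levelNumerator_zero α w η c q hw_sum] using mul_pos hq (prod_pos fun j _ => hα j)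
  · simpa [pow_succ] using neg_one_pow_mul_eval_levelNumerator_neg_pos hα hα_mono hw hη k

theorem isRoot_levelNumerator_iff (hpole : ∀ k, (levelNumerator α w η c q).eval (-α k) ≠ 0)
    {l : ℝ} : (levelNumerator α w η c q).IsRoot l
      ↔ (∀ j, l ≠ -α j) ∧ hyperexpLaplaceExponent α w η c l = q := by
  constructor
  · intro hroot
    have hl : ∀ j, l ≠ -α j := by
      rintro j rfl
      exact hpole j hroot
    have h := eval_levelNumerator_eq_mul α w η c q hl
    rw [hroot.eq_zero, eq_comm, mul_eq_zero, sub_eq_zero] at h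
    exact ⟨hl, h.resolve_right ((eval_polePolynomial_ne_zero_iff α).2 hl)⟩
  · rintro ⟨hl, hψ⟩
    rw [IsRoot, eval_levelNumerator_eq_mul α w η c q hl, hψ, sub_self, zero_mul]

theorem hasDerivAt_hyperexpLaplaceExponent {l : ℝ} (hl : (levelNumerator α w η c q).IsRoot l)
    (hD : (polePolynomial α).eval l ≠ 0) :
    HasDerivAt (hyperexpLaplaceExponent α w η c)
      ((levelNumerator α w η c q).derivative.eval l / (polePolynomial α).eval l) l := by
  refine ((HasDerivAt.div_of_eq_zero ((levelNumerator α w η c q).hasDerivAt l)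
    ((polePolynomial α).hasDerivAt l) hl hD).add_const q).congr_of_eventuallyEq ?_
  filter_upwards [(polePolynomial α).continuous.continuousAt.eventually_ne hD] with x hx
  rw [Pi.div_apply, eval_levelNumerator_eq_mul α w η c q
    ((eval_polePolynomial_ne_zero_iff α).1 hx), mul_div_cancel_right₀ _ hx, sub_add_cancel]

theorem deriv_hyperexpLaplaceExponent_ne_zero (hP : levelNumerator α w η c q ≠ 0)
    (hpole : ∀ k, (levelNumerator α w η c q).eval (-α k) ≠ 0)
    (hsimple : (levelNumerator α w η c q).roots.Nodup) {l : ℝ}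
    (hl : (levelNumerator α w η c q).IsRoot l) :
    deriv (hyperexpLaplaceExponent α w η c) l ≠ 0 := by
  have hD := (eval_polePolynomial_ne_zero_iff α).2 ((isRoot_levelNumerator_iff hpole).1 hl).1
  rw [(hasDerivAt_hyperexpLaplaceExponent hl hD).deriv]
  exact div_ne_zero (eval_derivative_ne_zero_of_nodup_roots hP hsimple hl) hD

end HyperexponentialLaplaceExponent

/-- For the bounded-variation hyper-exponential compound Poisson process with drift
(σ = 0, c > 0), for every q > 0 the equation ψ(λ) = q has exactly n+1 solutions
θ₁ > ⋯ > θ_{n+1} (away from the poles −αᵢ), all simple zeros of ψ − q, interlacing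
the poles: −αₙ < θ_{n+1} < −α_{n−1} < θₙ < ⋯ < −α₁ < θ₂ < 0 < θ₁. -/
theorem hyperexp_roots_sigma_zero
    (n : ℕ) (hn : 1 ≤ n)
    (α w : Fin n → ℝ)
    (hα_pos : ∀ i, 0 < α i) (hα_mono : StrictMono α)
    (hw_pos : ∀ i, 0 < w i) (hw_sum : ∑ i, w i = 1)
    (η : ℝ) (hη : 0 < η) (c : ℝ) (hc : 0 < c)
    (ψ : ℝ → ℝ)
    (hψ : ∀ l : ℝ, ψ l = c * l + η * ((∑ i, w i * α i / (l + α i)) - 1)) :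
    ∀ q : ℝ, 0 < q → ∃ θ : Fin (n + 1) → ℝ,
      StrictAnti θ ∧
      {l : ℝ | (∀ j, l ≠ -α j) ∧ ψ l = q} = Set.range θ ∧
      (∀ i, deriv ψ (θ i) ≠ 0) ∧
      0 < θ 0 ∧ θ 1 < 0 ∧
      (∀ i : Fin n, -α i < θ i.succ) ∧
      (∀ i : Fin n, ∀ h : i.val + 1 < n, θ ⟨i.val + 2, by omega⟩ < -α i) := by
  obtain rfl : ψ = hyperexpLaplaceExponent α w η c := funext hψ
  intro q hq
  obtain ⟨m, rfl⟩ : ∃ m, n = m + 1 := ⟨n - 1, by omega⟩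
  obtain ⟨M, hM, hsign⟩ :=
    exists_alternating_sign_levelNumerator hα_pos hα_mono hw_pos hw_sum hη hc hq
  set P := levelNumerator α w η c q
  set e : Fin (m + 3) → ℝ := Matrix.vecCons M (Matrix.vecCons 0 fun j => -α j)
  have he : StrictAnti e := (hα_mono.neg.vecCons (by simpa using hα_pos 0)).vecCons hM
  obtain ⟨θ, hθ, hθe, hθP⟩ := exists_strictAnti_zeros_of_alternating_sign P.continuous he hsign
  have hP : P ≠ 0 := fun h => by simpa [h] using hsign 0
  have hpole : ∀ k, P.eval (-α k) ≠ 0 := fun k => right_ne_zero_of_mul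
    (neg_one_pow_mul_eval_levelNumerator_neg_pos hα_pos hα_mono hw_pos hη k).ne'
  have hroots : P.roots = univ.val.map θ :=
    roots_eq_map_of_isRoot hP (natDegree_levelNumerator_le α w η c q) hθ.injective hθP
  refine ⟨θ, hθ, ?_, fun i => deriv_hyperexpLaplaceExponent_ne_zero hP hpole
    (hroots ▸ univ.nodup.map hθ.injective) (hθP i), ?_, ?_, fun i => ?_, fun i hi => ?_⟩
  · ext l
    rw [Set.mem_ofPred_eq, ← isRoot_levelNumerator_iff hpole, ← mem_roots hP, hroots,
      Multiset.mem_map]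
    simp only [mem_val, mem_univ, true_and, Set.mem_range]
  · simpa [e] using (hθe 0).1
  · simpa [e] using (hθe 1).2
  · simpa [e] using (hθe i.succ).1
  · exact (hθe ⟨i + 2, by omega⟩).2.trans_eq (show e i.succ.succ = -α i by simp [e])
end

section
/- Let q > 0 and let θ₁, …, θ_{n+2} be pairwise distinct real numbers, none equal to any −αⱼ, such that ψ(θᵢ) = q for every i. Then ψ′(θᵢ) ≠ 0 for every i, and for every real λ ∉ {θ₁, …, θ_{n+2}} ∪ {−α₁, …, −αₙ} one has ψ(λ) ≠ q and the partial fraction decomposition 1/(ψ(λ) − q) = ∑_{i=1}^{n+2} 1/(ψ′(θᵢ) (λ − θᵢ)). (This is Equation (4.2) of the paper, using that P(θᵢ)/Q′(θᵢ) = 1/ψ′(θᵢ) where P(λ) = ∏(λ+αᵢ) and Q = (ψ−q)P.) -/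
/-!
With `P(λ) = ∏ⱼ (λ + αⱼ)`, the function `Q = (ψ - q) P` is a polynomial of degree `n + 2` with
leading coefficient `σ² / 2`. It vanishes at the `n + 2` distinct points `θᵢ`, hence
`Q = (σ² / 2) ∏ᵢ (λ - θᵢ)`, and `ψ'(θᵢ) = Q'(θᵢ) / P(θᵢ) ≠ 0`. As `deg P < n + 2`, the barycentric
Lagrange formula for `P` at the nodes `θᵢ` reads `P / Q = ∑ᵢ P(θᵢ) / (Q'(θᵢ) (λ - θᵢ))`.
-/

open Polynomial Finset Lagrange Filter Topology

namespace Lagrange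

variable {F ι : Type*} [Field F] {s : Finset ι} {v : ι → F}

theorem eq_C_coeff_card_mul_nodal {Q : F[X]} (hvs : Set.InjOn v s) (hdeg : Q.natDegree ≤ #s)
    (hroot : ∀ i ∈ s, Q.eval (v i) = 0) : Q = C (Q.coeff #s) * nodal s v := by
  refine eq_of_degree_sub_lt_of_eval_index_eq s hvs
    ((degree_lt_iff_coeff_zero _ _).2 fun m hm => ?_) fun i hi => ?_
  · rcases hm.eq_or_lt with rfl | hlt
    · rw [coeff_sub, coeff_C_mul, ← natDegree_nodal (v := v), (nodal_monic).coeff_natDegree,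
        mul_one, sub_self]
    · rw [coeff_sub, coeff_C_mul, coeff_eq_zero_of_natDegree_lt (p := nodal s v)
        (by rwa [natDegree_nodal]), coeff_eq_zero_of_natDegree_lt (hdeg.trans_lt hlt), mul_zero,
        sub_zero]
  · rw [hroot i hi, eval_mul, eval_nodal_at_node hi, mul_zero]

theorem eval_derivative_nodal_ne_zero (hvs : Set.InjOn v s) {i : ι} (hi : i ∈ s) :
    (nodal s v).derivative.eval (v i) ≠ 0 := by
  classical
  simpa [nodalWeight_eq_eval_derivative_nodal hi] using nodalWeight_ne_zero hvs hi

theorem eval_div_eval_nodal {P : F[X]} (hvs : Set.InjOn v s) (hdeg : P.degree < #s) {x : F}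
    (hx : ∀ i ∈ s, x ≠ v i) :
    P.eval x / (nodal s v).eval x
      = ∑ i ∈ s, P.eval (v i) / ((nodal s v).derivative.eval (v i) * (x - v i)) := by
  classical
  conv_lhs => rw [eq_interpolate hvs hdeg]
  rw [eval_interpolate_not_at_node _ hx, mul_div_cancel_left₀ _ (eval_nodal_not_at_node hx)]
  refine sum_congr rfl fun i hi => ?_
  rw [nodalWeight_eq_eval_derivative_nodal hi, div_eq_mul_inv, mul_inv]
  ring

end Lagrange

theorem Polynomial.hasDerivAt_eval_div_eval_of_eval_eq_zero {𝕜 : Type*}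
    [NontriviallyNormedField 𝕜] {P Q : 𝕜[X]} {x : 𝕜} (hQ : Q.eval x = 0) (hP : P.eval x ≠ 0) :
    HasDerivAt (fun y => Q.eval y / P.eval y) (Q.derivative.eval x / P.eval x) x := by
  have h := (Q.hasDerivAt x).fun_div (P.hasDerivAt x) hP
  rwa [hQ, zero_mul, sub_zero, sq, mul_div_mul_right _ _ hP] at h

namespace HyperExp

variable {n : ℕ} (α w : Fin n → ℝ) (η c σ q : ℝ)

noncomputable def laplaceExponent (l : ℝ) : ℝ :=
  c * l + σ ^ 2 / 2 * l ^ 2 + η * ((∑ i, w i * α i / (l + α i)) - 1)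

noncomputable def poleProd : ℝ[X] := nodal univ (-α)

/-- The polynomial `Q = (ψ - q) P` of the paper, `P = poleProd α`. -/
noncomputable def numerator : ℝ[X] :=
  (C (σ ^ 2 / 2) * X ^ 2 + C c * X - C (η + q)) * poleProd α
    + ∑ i, C (η * w i * α i) * nodal (univ.erase i) (-α)

variable {α}

theorem eval_poleProd_ne_zero {l : ℝ} (hl : ∀ j, l ≠ -α j) : (poleProd α).eval l ≠ 0 :=
  eval_nodal_not_at_node fun j _ => hl j

theorem coeff_poleProd : (poleProd α).coeff n = 1 := by
  have h := (nodal_monic (s := univ) (v := -α)).coeff_natDegree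
  rwa [natDegree_nodal, card_univ, Fintype.card_fin] at h

theorem eval_numerator {l : ℝ} (hl : ∀ j, l ≠ -α j) :
    (numerator α w η c σ q).eval l = (laplaceExponent α w η c σ l - q) * (poleProd α).eval l := by
  have hsplit : ∀ i, w i * α i / (l + α i) * (poleProd α).eval l
      = w i * α i * (nodal (univ.erase i) (-α)).eval l := by
    intro i
    have : l + α i ≠ 0 := fun h => hl i (by linarith)
    rw [poleProd, nodal_eq_mul_nodal_erase (mem_univ i), eval_mul, eval_sub, eval_X, eval_C,
      Pi.neg_apply, sub_neg_eq_add]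
    field_simp
  calc (numerator α w η c σ q).eval l
      = (σ ^ 2 / 2 * l ^ 2 + c * l - (η + q)) * (poleProd α).eval l
          + η * ∑ i, w i * α i * (nodal (univ.erase i) (-α)).eval l := by
        simp only [numerator, eval_add, eval_sub, eval_mul, eval_pow, eval_C, eval_X,
          eval_finsetSum, mul_sum, mul_assoc]
    _ = (laplaceExponent α w η c σ l - q) * (poleProd α).eval l := by
        simp only [← hsplit, ← sum_mul, laplaceExponent]
        ring

theorem degree_poleProd : (poleProd α).degree = n := by
  simp [poleProd, degree_nodal]

theorem natDegree_poleProd_le : (poleProd α).natDegree ≤ n := by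
  simp [poleProd, natDegree_nodal]

theorem natDegree_residues_le :
    (∑ i, C (η * w i * α i) * nodal (univ.erase i) (-α)).natDegree ≤ n :=
  natDegree_sum_le_of_forall_le _ _ fun i _ =>
    (natDegree_C_mul_le _ _).trans (by simp [natDegree_nodal])

theorem natDegree_quadraticTerm_le :
    (C (σ ^ 2 / 2) * X ^ 2 + C c * X - C (η + q)).natDegree ≤ 2 := by
  compute_degree

theorem natDegree_numerator_le : (numerator α w η c σ q).natDegree ≤ n + 2 :=
  natDegree_add_le_of_degree_le
    ((natDegree_mul_le_of_le (natDegree_quadraticTerm_le η c σ q) natDegree_poleProd_le).trans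
      (by omega))
    ((natDegree_residues_le w η).trans (by omega))

theorem coeff_numerator : (numerator α w η c σ q).coeff (n + 2) = σ ^ 2 / 2 := by
  rw [numerator, coeff_add, coeff_eq_zero_of_natDegree_lt
    ((natDegree_residues_le w η).trans_lt (by omega)), add_zero, add_comm n,
    coeff_mul_add_eq_of_natDegree_le (natDegree_quadraticTerm_le η c σ q) natDegree_poleProd_le,
    coeff_poleProd]
  simp

theorem hasDerivAt_laplaceExponent_of_eq {x : ℝ} (hx : ∀ j, x ≠ -α j)
    (hroot : laplaceExponent α w η c σ x = q) :
    HasDerivAt (laplaceExponent α w η c σ)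
      ((numerator α w η c σ q).derivative.eval x / (poleProd α).eval x) x := by
  have hev : laplaceExponent α w η c σ
      =ᶠ[𝓝 x] fun y => (numerator α w η c σ q).eval y / (poleProd α).eval y + q :=
    (eventually_all.2 fun j => eventually_ne_nhds (hx j)).mono fun y hy => by
      dsimp only
      rw [eval_numerator w η c σ q hy, mul_div_cancel_right₀ _ (eval_poleProd_ne_zero hy),
        sub_add_cancel]
  have hQx : (numerator α w η c σ q).eval x = 0 := by
    rw [eval_numerator w η c σ q hx, hroot, sub_self, zero_mul]
  exact ((hasDerivAt_eval_div_eval_of_eval_eq_zero hQx (eval_poleProd_ne_zero hx)).add_const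
    q).congr_of_eventuallyEq hev

variable {w η c σ q} {θ : Fin (n + 2) → ℝ} (hθ_inj : Function.Injective θ)
  (hθ_pole : ∀ i j, θ i ≠ -α j) (hθ_root : ∀ i, laplaceExponent α w η c σ (θ i) = q)
include hθ_inj hθ_pole hθ_root

theorem numerator_eq_C_mul_nodal : numerator α w η c σ q = C (σ ^ 2 / 2) * nodal univ θ := by
  have h := eq_C_coeff_card_mul_nodal (s := univ) hθ_inj.injOn
    (by simpa using natDegree_numerator_le (α := α) w η c σ q)
    fun i _ => by rw [eval_numerator w η c σ q (hθ_pole i), hθ_root, sub_self, zero_mul]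
  rwa [card_univ, Fintype.card_fin, coeff_numerator] at h

theorem deriv_laplaceExponent_eq (i : Fin (n + 2)) :
    deriv (laplaceExponent α w η c σ) (θ i)
      = σ ^ 2 / 2 * (nodal univ θ).derivative.eval (θ i) / (poleProd α).eval (θ i) := by
  rw [(hasDerivAt_laplaceExponent_of_eq w η c σ q (hθ_pole i) (hθ_root i)).deriv,
    numerator_eq_C_mul_nodal hθ_inj hθ_pole hθ_root, derivative_C_mul, eval_mul, eval_C]

theorem laplaceExponent_sub_eq {l : ℝ} (hl : ∀ j, l ≠ -α j) :
    laplaceExponent α w η c σ l - q = σ ^ 2 / 2 * (nodal univ θ).eval l / (poleProd α).eval l := by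
  rw [eq_div_iff (eval_poleProd_ne_zero hl), ← eval_numerator w η c σ q hl,
    numerator_eq_C_mul_nodal hθ_inj hθ_pole hθ_root, eval_mul, eval_C]

end HyperExp

open HyperExp in
theorem hyperexp_partial_fraction_general
    (n : ℕ)
    (α w : Fin n → ℝ)
    (η : ℝ) (c σ : ℝ) (hσ : 0 < σ)
    (ψ : ℝ → ℝ)
    (hψ : ∀ l : ℝ, ψ l
      = c * l + σ ^ 2 / 2 * l ^ 2 + η * ((∑ i, w i * α i / (l + α i)) - 1))
    (q : ℝ)
    (θ : Fin (n + 2) → ℝ) (hθ_inj : Function.Injective θ)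
    (hθ_pole : ∀ i j, θ i ≠ -α j)
    (hθ_root : ∀ i, ψ (θ i) = q) :
    (∀ i, deriv ψ (θ i) ≠ 0) ∧
    ∀ l : ℝ, (∀ i, l ≠ θ i) → (∀ j, l ≠ -α j) →
      ψ l ≠ q ∧ 1 / (ψ l - q) = ∑ i, 1 / (deriv ψ (θ i) * (l - θ i)) := by
  obtain rfl : ψ = laplaceExponent α w η c σ := funext hψ
  have hk : σ ^ 2 / 2 ≠ 0 := by positivity
  have hderiv := deriv_laplaceExponent_eq hθ_inj hθ_pole hθ_root
  refine ⟨fun i => ?_, fun l hlθ hlα => ⟨fun h => ?_, ?_⟩⟩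
  · rw [hderiv]
    exact div_ne_zero (mul_ne_zero hk (eval_derivative_nodal_ne_zero hθ_inj.injOn (mem_univ i)))
      (eval_poleProd_ne_zero (hθ_pole i))
  · rw [← sub_eq_zero, laplaceExponent_sub_eq hθ_inj hθ_pole hθ_root hlα] at h
    simp [hk, eval_nodal_not_at_node fun i _ => hlθ i, eval_poleProd_ne_zero hlα] at h
  · have hdeg : (poleProd α).degree < #(univ : Finset (Fin (n + 2))) := by
      rw [degree_poleProd, card_univ, Fintype.card_fin]
      exact_mod_cast (by omega : n < n + 2)
    rw [laplaceExponent_sub_eq hθ_inj hθ_pole hθ_root hlα, one_div_div, mul_comm, ← div_div,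
      eval_div_eval_nodal hθ_inj.injOn hdeg fun i _ => hlθ i, sum_div]
    refine sum_congr rfl fun i _ => ?_
    rw [hderiv]
    field_simp

/-- Equation (4.2) of the paper: the partial fraction decomposition
1/(ψ(λ) − q) = ∑ᵢ 1/(ψ′(θᵢ)(λ − θᵢ)) where θ₁, …, θ_{n+2} are the roots of ψ = q,
all of which are simple. -/
theorem hyperexp_partial_fraction
    (n : ℕ) (hn : 1 ≤ n)
    (α w : Fin n → ℝ)
    (hα_pos : ∀ i, 0 < α i) (hα_mono : StrictMono α)
    (hw_pos : ∀ i, 0 < w i) (hw_sum : ∑ i, w i = 1)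
    (η : ℝ) (hη : 0 < η) (c σ : ℝ) (hσ : 0 < σ)
    (ψ : ℝ → ℝ)
    (hψ : ∀ l : ℝ, ψ l
      = c * l + σ ^ 2 / 2 * l ^ 2 + η * ((∑ i, w i * α i / (l + α i)) - 1))
    (q : ℝ) (hq : 0 < q)
    (θ : Fin (n + 2) → ℝ) (hθ_inj : Function.Injective θ)
    (hθ_pole : ∀ i j, θ i ≠ -α j)
    (hθ_root : ∀ i, ψ (θ i) = q) :
    (∀ i, deriv ψ (θ i) ≠ 0) ∧
    ∀ l : ℝ, (∀ i, l ≠ θ i) → (∀ j, l ≠ -α j) →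
      ψ l ≠ q ∧ 1 / (ψ l - q) = ∑ i, 1 / (deriv ψ (θ i) * (l - θ i)) :=
  hyperexp_partial_fraction_general n α w η c σ hσ ψ hψ q θ hθ_inj hθ_pole hθ_root
end

section
/- Let q > 0 and let θ₁ > θ₂ > ⋯ > θ_{n+2} be pairwise distinct real numbers, none equal to any −αⱼ, such that ψ(θᵢ) = q and ψ′(θᵢ) ≠ 0 for every i. Define W(x) = ∑_{i=1}^{n+2} e^{θᵢ x}/ψ′(θᵢ) for x ≥ 0. Then for every λ > θ₁ the integral ∫₀^∞ e^{−λx} W(x) dx converges, ψ(λ) ≠ q, and ∫₀^∞ e^{−λx} W(x) dx = 1/(ψ(λ) − q); that is, W is the q-scale function W^{(q)} of the hyper-exponential jump-diffusion (Equation (4.3) of the paper). -/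
/-!
Clearing denominators, `(ψ(λ) - q) ∏ⱼ (λ + αⱼ)` is a polynomial of degree `n + 2` with leading
coefficient `σ²/2`; having the `n + 2` distinct roots `θᵢ`, it equals `σ²/2 ∏ᵢ (λ - θᵢ)`. Hence
`1/(ψ - q)` is the rational function `∏ⱼ (λ + αⱼ) / (σ²/2 ∏ᵢ (λ - θᵢ))`, whose numerator has degree
`n < n + 2`, so Lagrange interpolation at the nodes `θᵢ` gives its partial fraction expansion
`∑ᵢ 1 / ((λ - θᵢ) ψ'(θᵢ))`. This is exactly the Laplace transform of `W`, term by term.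
Since `ψ(0) = 0 < q`, the same factorization forces `θ₁ > 0`, so every `λ > θ₁` avoids the poles.
-/

open Polynomial Lagrange Finset MeasureTheory Set Function

section Nodal

variable {F ι : Type*} [Field F]

lemma eval_nodal_neg (s : Finset ι) (α : ι → F) (x : F) :
    eval x (nodal s (-α)) = ∏ i ∈ s, (x + α i) := by
  simp [eval_nodal]

variable [Fintype ι] [DecidableEq ι]

lemma sum_div_mul_eval_nodal_neg (α b : ι → F) {x : F} (hx : ∀ i, x + α i ≠ 0) :
    (∑ i, b i / (x + α i)) * eval x (nodal univ (-α))
      = eval x (∑ i, C (b i) * nodal (univ.erase i) (-α)) := by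
  rw [sum_mul, eval_finsetSum]
  refine sum_congr rfl fun i _ => ?_
  rw [nodal_eq_mul_nodal_erase (mem_univ i), eval_mul, eval_mul, eval_C]
  simp only [eval_sub, eval_X, eval_C, Pi.neg_apply, sub_neg_eq_add]
  field_simp [hx i]

lemma degree_sum_C_mul_nodal_erase_lt (v b : ι → F) :
    (∑ i, C (b i) * nodal (univ.erase i) v).degree < Fintype.card ι := by
  rw [← mem_degreeLT]
  refine Submodule.sum_mem _ fun i _ => ?_
  rw [C_mul']
  refine Submodule.smul_mem _ _ (mem_degreeLT.mpr ?_)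
  rw [degree_nodal, card_erase_of_mem (mem_univ i), card_univ, Nat.cast_lt]
  exact Nat.sub_lt (Fintype.card_pos_iff.mpr ⟨i⟩) one_pos

lemma eval_div_eval_nodal_eq_sum {κ : Type*} [DecidableEq κ] {s : Finset κ} {v : κ → F}
    {P : F[X]} (hvs : Set.InjOn v s) (hP : P.degree < #s) {x : F} (hx : ∀ i ∈ s, x ≠ v i) :
    eval x P / eval x (nodal s v) = ∑ i ∈ s, nodalWeight s v i * eval (v i) P / (x - v i) := by
  rw [div_eq_iff (eval_nodal_not_at_node hx), eq_interpolate hvs hP,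
    eval_interpolate_not_at_node _ hx, mul_comm, ← eq_interpolate hvs hP]
  congr 1
  refine sum_congr rfl fun i _ => ?_
  ring

end Nodal

section LaplaceExponent

variable {ι : Type*} [Fintype ι] (α w : ι → ℝ) (η c σ q : ℝ)

noncomputable def laplaceExponent (l : ℝ) : ℝ :=
  c * l + σ ^ 2 / 2 * l ^ 2 + η * ((∑ i, w i * α i / (l + α i)) - 1)

variable {α w η c σ} in
lemma laplaceExponent_zero (hα : ∀ i, α i ≠ 0) (hw : ∑ i, w i = 1) :
    laplaceExponent α w η c σ 0 = 0 := by
  simp [laplaceExponent, hα, hw]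

variable [DecidableEq ι]

/-- The polynomial `(ψ - q) · ∏ⱼ (X + αⱼ)`. -/
noncomputable def laplaceNumerator : ℝ[X] :=
  (C (σ ^ 2 / 2) * X ^ 2 + C c * X + C (-(η + q))) * nodal univ (-α)
    + C η * ∑ i, C (w i * α i) * nodal (univ.erase i) (-α)

variable {α w η c σ q}

lemma laplaceExponent_sub_mul_eval_nodal {x : ℝ} (hx : ∀ j, x + α j ≠ 0) :
    (laplaceExponent α w η c σ x - q) * eval x (nodal univ (-α))
      = eval x (laplaceNumerator α w η c σ q) := by
  have hsum := sum_div_mul_eval_nodal_neg α (fun i => w i * α i) hx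
  simp only [laplaceNumerator, eval_add, eval_mul, eval_C, eval_pow, eval_X, ← hsum,
    laplaceExponent]
  ring

lemma degree_and_leadingCoeff_laplaceNumerator (hσ : σ ≠ 0) :
    (laplaceNumerator α w η c σ q).degree = Fintype.card ι + 2 ∧
      (laplaceNumerator α w η c σ q).leadingCoeff = σ ^ 2 / 2 := by
  have hσ' : σ ^ 2 / 2 ≠ 0 := by positivity
  have hmain : ((C (σ ^ 2 / 2) * X ^ 2 + C c * X + C (-(η + q))) * nodal univ (-α)).degree
      = (Fintype.card ι : WithBot ℕ) + 2 := by
    rw [degree_mul, degree_quadratic hσ', degree_nodal, card_univ, add_comm]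
  have hrest : (C η * ∑ i, C (w i * α i) * nodal (univ.erase i) (-α)).degree
      < ((C (σ ^ 2 / 2) * X ^ 2 + C c * X + C (-(η + q))) * nodal univ (-α)).degree := by
    rw [hmain, C_mul']
    refine (degree_smul_le _ _).trans_lt ((degree_sum_C_mul_nodal_erase_lt _ _).trans ?_)
    exact_mod_cast Nat.lt_add_of_pos_right two_pos
  refine ⟨by rw [laplaceNumerator, degree_add_eq_left_of_degree_lt hrest, hmain], ?_⟩
  rw [laplaceNumerator, leadingCoeff_add_of_degree_lt' hrest, leadingCoeff_mul,
    leadingCoeff_quadratic hσ', nodal_monic.leadingCoeff, mul_one]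

end LaplaceExponent

section Roots

variable {ι κ : Type*} [Fintype ι] [DecidableEq ι] [Fintype κ]
  {α w : ι → ℝ} {η c σ q : ℝ} {θ : κ → ℝ}

lemma laplaceNumerator_eq_C_mul_nodal (hσ : σ ≠ 0) (hθ : Injective θ)
    (hcard : Fintype.card κ = Fintype.card ι + 2) (hpole : ∀ i j, θ i + α j ≠ 0)
    (hroot : ∀ i, laplaceExponent α w η c σ (θ i) = q) :
    laplaceNumerator α w η c σ q = C (σ ^ 2 / 2) * nodal univ θ := by
  have hσ' : σ ^ 2 / 2 ≠ 0 := by positivity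
  obtain ⟨hdeg, hlead⟩ :=
    degree_and_leadingCoeff_laplaceNumerator (α := α) (w := w) (η := η) (c := c) (q := q) hσ
  refine eq_of_degree_le_of_eval_index_eq univ hθ.injOn ?_ ?_ ?_ fun i _ => ?_
  · rw [hdeg, card_univ, hcard]; rfl
  · rw [hdeg, degree_C_mul hσ', degree_nodal, card_univ, hcard]; rfl
  · rw [hlead, leadingCoeff_mul, leadingCoeff_C, nodal_monic.leadingCoeff, mul_one]
  · rw [← laplaceExponent_sub_mul_eval_nodal (hpole i), hroot, sub_self, zero_mul, eval_mul,
      eval_nodal_at_node (mem_univ i), mul_zero]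

lemma deriv_laplaceExponent_of_eq {x : ℝ} (hx : ∀ j, x + α j ≠ 0)
    (hroot : laplaceExponent α w η c σ x = q) :
    deriv (laplaceExponent α w η c σ) x
      = eval x (derivative (laplaceNumerator α w η c σ q)) / eval x (nodal univ (-α)) := by
  set N := laplaceNumerator α w η c σ q
  set Q : ℝ[X] := nodal univ (-α)
  have hQ : eval x Q ≠ 0 := by
    rw [eval_nodal_neg]; exact prod_ne_zero_iff.mpr fun j _ => hx j
  have hN : eval x N = 0 := by
    rw [← laplaceExponent_sub_mul_eval_nodal hx, hroot, sub_self, zero_mul]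
  have hlocal : laplaceExponent α w η c σ =ᶠ[nhds x] fun y => eval y N / eval y Q + q := by
    filter_upwards [Q.continuousAt.eventually_ne hQ] with y hy
    have hy' : ∀ j, y + α j ≠ 0 := by
      rw [eval_nodal_neg, prod_ne_zero_iff] at hy; exact fun j => hy j (mem_univ j)
    rw [← laplaceExponent_sub_mul_eval_nodal hy', mul_div_cancel_right₀ _ hy, sub_add_cancel]
  rw [hlocal.deriv_eq, (((N.hasDerivAt x).fun_div (Q.hasDerivAt x) hQ).add_const q).deriv, hN,
    zero_mul, sub_zero, sq, mul_div_mul_right _ _ hQ]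

lemma exists_pos_of_laplaceNumerator_eq (hα : ∀ j, 0 < α j) (hw : ∑ j, w j = 1) (hq : 0 < q)
    (hN : laplaceNumerator α w η c σ q = C (σ ^ 2 / 2) * nodal univ θ) : ∃ i, 0 < θ i := by
  by_contra! hθ
  have hQ : 0 < eval 0 (nodal univ (-α)) := by
    rw [eval_nodal_neg]; exact prod_pos fun j _ => by simpa using hα j
  have hfactor := laplaceExponent_sub_mul_eval_nodal (η := η) (c := c) (σ := σ) (w := w) (q := q)
    (x := 0) fun j => by simpa using (hα j).ne'
  rw [laplaceExponent_zero (fun j => (hα j).ne') hw, hN, eval_mul, eval_C] at hfactor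
  have hnodal : 0 ≤ eval 0 (nodal univ θ) := by
    rw [eval_nodal]; exact prod_nonneg fun i _ => by linarith [hθ i]
  nlinarith [sq_nonneg σ]

lemma laplaceExponent_ne_of_forall_ne (hσ : σ ≠ 0)
    (hN : laplaceNumerator α w η c σ q = C (σ ^ 2 / 2) * nodal univ θ)
    {x : ℝ} (hxθ : ∀ i, x ≠ θ i) (hx : ∀ j, x + α j ≠ 0) :
    laplaceExponent α w η c σ x ≠ q := by
  intro hψ
  have hfactor := laplaceExponent_sub_mul_eval_nodal (w := w) (η := η) (c := c) (σ := σ) (q := q) hx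
  rw [hψ, sub_self, zero_mul, hN, eval_mul, eval_C] at hfactor
  exact mul_ne_zero (by positivity) (eval_nodal_not_at_node fun i _ => hxθ i) hfactor.symm

variable [DecidableEq κ]

lemma sum_inv_mul_deriv_laplaceExponent (hσ : σ ≠ 0) (hθ : Injective θ)
    (hcard : Fintype.card κ = Fintype.card ι + 2) (hpole : ∀ i j, θ i + α j ≠ 0)
    (hroot : ∀ i, laplaceExponent α w η c σ (θ i) = q)
    {x : ℝ} (hxθ : ∀ i, x ≠ θ i) (hx : ∀ j, x + α j ≠ 0) :
    ∑ i, 1 / ((x - θ i) * deriv (laplaceExponent α w η c σ) (θ i))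
      = 1 / (laplaceExponent α w η c σ x - q) := by
  have hσ' : σ ^ 2 / 2 ≠ 0 := by positivity
  have hN := laplaceNumerator_eq_C_mul_nodal hσ hθ hcard hpole hroot
  have hQ : ∀ y, (∀ j, y + α j ≠ 0) → eval y (nodal univ (-α)) ≠ 0 := fun y hy => by
    rw [eval_nodal_neg]; exact prod_ne_zero_iff.mpr fun j _ => hy j
  have hderiv : ∀ i, deriv (laplaceExponent α w η c σ) (θ i)
      = σ ^ 2 / 2 / (nodalWeight univ θ i * eval (θ i) (nodal univ (-α))) := fun i => by
    rw [deriv_laplaceExponent_of_eq (hpole i) (hroot i), hN, derivative_C_mul, eval_mul, eval_C,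
      nodalWeight_eq_eval_derivative_nodal (mem_univ i), ← div_div, div_inv_eq_mul]
  have hψx : laplaceExponent α w η c σ x - q
      = σ ^ 2 / 2 * eval x (nodal univ θ) / eval x (nodal univ (-α)) := by
    rw [eq_div_iff (hQ x hx), laplaceExponent_sub_mul_eval_nodal hx, hN, eval_mul, eval_C]
  have hdegQ : (nodal univ (-α)).degree < #(univ : Finset κ) := by
    rw [degree_nodal, card_univ, card_univ, hcard, Nat.cast_lt]; omega
  have hnodal : eval x (nodal univ θ) ≠ 0 := eval_nodal_not_at_node fun i _ => hxθ i
  calc ∑ i, 1 / ((x - θ i) * deriv (laplaceExponent α w η c σ) (θ i))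
      = (∑ i, nodalWeight univ θ i * eval (θ i) (nodal univ (-α)) / (x - θ i)) / (σ ^ 2 / 2) := by
        rw [sum_div]
        refine sum_congr rfl fun i _ => ?_
        have hxi : x - θ i ≠ 0 := sub_ne_zero.mpr (hxθ i)
        have hw := nodalWeight_ne_zero hθ.injOn (mem_univ i)
        rw [hderiv i]
        field_simp
    _ = eval x (nodal univ (-α)) / eval x (nodal univ θ) / (σ ^ 2 / 2) := by
        rw [eval_div_eval_nodal_eq_sum hθ.injOn hdegQ fun i _ => hxθ i]
    _ = 1 / (laplaceExponent α w η c σ x - q) := by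
        rw [hψx]
        field_simp [hQ x hx]

end Roots

section LaplaceTransform

variable {κ : Type*} [Fintype κ] {θ : κ → ℝ} {l : ℝ}

lemma exp_neg_mul_mul_sum_exp_div (a : κ → ℝ) (x : ℝ) :
    Real.exp (-(l * x)) * ∑ i, Real.exp (θ i * x) / a i
      = ∑ i, Real.exp ((θ i - l) * x) / a i := by
  rw [mul_sum]
  refine sum_congr rfl fun i _ => ?_
  rw [← mul_div_assoc, ← Real.exp_add]
  ring_nf

lemma integrableOn_exp_neg_mul_mul_sum_exp_div (hθ : ∀ i, θ i < l) (a : κ → ℝ) :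
    IntegrableOn (fun x => Real.exp (-(l * x)) * ∑ i, Real.exp (θ i * x) / a i) (Ioi 0) := by
  simp_rw [exp_neg_mul_mul_sum_exp_div]
  exact integrable_finsetSum _ fun i _ =>
    (integrableOn_exp_mul_Ioi (sub_neg.mpr (hθ i)) 0).div_const _

lemma integral_exp_neg_mul_mul_sum_exp_div (hθ : ∀ i, θ i < l) (a : κ → ℝ) :
    ∫ x in Ioi (0 : ℝ), Real.exp (-(l * x)) * ∑ i, Real.exp (θ i * x) / a i
      = ∑ i, 1 / ((l - θ i) * a i) := by
  simp_rw [exp_neg_mul_mul_sum_exp_div]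
  rw [integral_finsetSum _ fun i _ =>
    (integrableOn_exp_mul_Ioi (sub_neg.mpr (hθ i)) 0).div_const _]
  refine sum_congr rfl fun i _ => ?_
  rw [integral_div, integral_exp_mul_Ioi (sub_neg.mpr (hθ i)), mul_zero, Real.exp_zero,
    neg_div, ← div_neg, neg_sub, div_div]

end LaplaceTransform

theorem hyperexp_scale_function_general
    (n : ℕ)
    (α w : Fin n → ℝ)
    (hα_pos : ∀ i, 0 < α i)
    (hw_sum : ∑ i, w i = 1)
    (η : ℝ) (c σ : ℝ) (hσ : 0 < σ)
    (ψ : ℝ → ℝ)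
    (hψ : ∀ l : ℝ, ψ l
      = c * l + σ ^ 2 / 2 * l ^ 2 + η * ((∑ i, w i * α i / (l + α i)) - 1))
    (q : ℝ) (hq : 0 < q)
    (θ : Fin (n + 2) → ℝ) (hθ_anti : StrictAnti θ)
    (hθ_pole : ∀ i j, θ i ≠ -α j)
    (hθ_root : ∀ i, ψ (θ i) = q) :
    ∀ l : ℝ, θ 0 < l →
      MeasureTheory.IntegrableOn
        (fun x => Real.exp (-(l * x)) * ∑ i, Real.exp (θ i * x) / deriv ψ (θ i))
        (Set.Ioi 0) ∧
      ψ l ≠ q ∧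
      ∫ x in Set.Ioi (0:ℝ),
          Real.exp (-(l * x)) * ∑ i, Real.exp (θ i * x) / deriv ψ (θ i)
        = 1 / (ψ l - q) := by
  obtain rfl : ψ = laplaceExponent α w η c σ := funext hψ
  intro l hl
  have hcard : Fintype.card (Fin (n + 2)) = Fintype.card (Fin n) + 2 := by simp
  have hpole : ∀ i j, θ i + α j ≠ 0 := fun i j h => hθ_pole i j (eq_neg_of_add_eq_zero_left h)
  have hN := laplaceNumerator_eq_C_mul_nodal hσ.ne' hθ_anti.injective hcard hpole hθ_root
  have hθl : ∀ i, θ i < l := fun i => (hθ_anti.antitone (Fin.zero_le i)).trans_lt hl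
  have hl_pos : 0 < l := by
    obtain ⟨i, hi⟩ := exists_pos_of_laplaceNumerator_eq hα_pos hw_sum hq hN
    exact hi.trans (hθl i)
  have hlθ : ∀ i, l ≠ θ i := fun i => (hθl i).ne'
  have hl_pole : ∀ j, l + α j ≠ 0 := fun j => (add_pos hl_pos (hα_pos j)).ne'
  refine ⟨integrableOn_exp_neg_mul_mul_sum_exp_div hθl _,
    laplaceExponent_ne_of_forall_ne hσ.ne' hN hlθ hl_pole, ?_⟩
  rw [integral_exp_neg_mul_mul_sum_exp_div hθl,
    sum_inv_mul_deriv_laplaceExponent hσ.ne' hθ_anti.injective hcard hpole hθ_root hlθ hl_pole]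

/-- Equation (4.3) of the paper: W^{(q)}(x) = ∑ᵢ e^{θᵢx}/ψ′(θᵢ) is the q-scale
function of the hyper-exponential jump-diffusion, i.e. its Laplace transform on
[0, ∞) is 1/(ψ(λ) − q) for λ > θ₁ = Φ(q). -/
theorem hyperexp_scale_function
    (n : ℕ) (hn : 1 ≤ n)
    (α w : Fin n → ℝ)
    (hα_pos : ∀ i, 0 < α i) (hα_mono : StrictMono α)
    (hw_pos : ∀ i, 0 < w i) (hw_sum : ∑ i, w i = 1)
    (η : ℝ) (hη : 0 < η) (c σ : ℝ) (hσ : 0 < σ)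
    (ψ : ℝ → ℝ)
    (hψ : ∀ l : ℝ, ψ l
      = c * l + σ ^ 2 / 2 * l ^ 2 + η * ((∑ i, w i * α i / (l + α i)) - 1))
    (q : ℝ) (hq : 0 < q)
    (θ : Fin (n + 2) → ℝ) (hθ_anti : StrictAnti θ)
    (hθ_pole : ∀ i j, θ i ≠ -α j)
    (hθ_root : ∀ i, ψ (θ i) = q)
    (hθ_simple : ∀ i, deriv ψ (θ i) ≠ 0) :
    ∀ l : ℝ, θ 0 < l →
      MeasureTheory.IntegrableOn
        (fun x => Real.exp (-(l * x)) * ∑ i, Real.exp (θ i * x) / deriv ψ (θ i))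
        (Set.Ioi 0) ∧
      ψ l ≠ q ∧
      ∫ x in Set.Ioi (0:ℝ),
          Real.exp (-(l * x)) * ∑ i, Real.exp (θ i * x) / deriv ψ (θ i)
        = 1 / (ψ l - q) :=
  hyperexp_scale_function_general n α w hα_pos hw_sum η c σ hσ ψ hψ q hq θ hθ_anti hθ_pole hθ_root
end

section
/- Let p > 0 and q > 0. Let θ₁, …, θ_{n+2} be pairwise distinct real numbers, none equal to any −αⱼ, such that ψ(θᵢ) = p + q and ψ′(θᵢ) ≠ 0 for every i, and let φ be a real number, not equal to any θᵢ nor to any −αⱼ, with ψ(φ) = p. Then for every x ≥ 0, e^{φx} ( 1 + q ∫₀^x e^{−φz} ( ∑_{i=1}^{n+2} e^{θᵢ z}/ψ′(θᵢ) ) dz ) = q ∑_{i=1}^{n+2} e^{θᵢ x} / ( (θᵢ − φ) ψ′(θᵢ) ); that is, the function 𝓗^{(p,q)}(x) = e^{Φ(p)x}(1 + q∫₀^x e^{−Φ(p)z}W^{(p+q)}(z)dz) of the hyper-exponential jump-diffusion equals q ∑ e^{θᵢ x}/((θᵢ − Φ(p))ψ′(θᵢ)) for x ≥ 0 (Equation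 (4.5) of the paper). -/
/-!
Clearing the poles, `(ψ(λ) - (p + q)) ∏ⱼ (λ + αⱼ)` is a polynomial of degree `n + 2` with leading
coefficient `σ²/2` vanishing at the `n + 2` distinct `θᵢ`, so it equals `(σ²/2) ∏ᵢ (λ - θᵢ)`.
This gives `ψ'(θᵢ)` in closed form, and the partial fraction expansion of
`∏ⱼ (λ + αⱼ) / ∏ᵢ (λ - θᵢ)` at `λ = φ`, where `ψ(φ) - (p + q) = -q`, yields
`q ∑ᵢ 1 / ((θᵢ - φ) ψ'(θᵢ)) = 1`. Integrating the exponentials termwise, the left-hand side is the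
right-hand side plus `e^{φx} (1 - q ∑ᵢ 1 / ((θᵢ - φ) ψ'(θᵢ)))`, which vanishes.
-/

open Polynomial Finset

namespace Lagrange

theorem eval_eq_eval_nodal_mul_sum {F ι : Type*} [Field F] [DecidableEq ι] {s : Finset ι}
    {v : ι → F} (hvs : Set.InjOn v s) {f : F[X]} (hf : f.degree < #s) {x : F}
    (hx : ∀ i ∈ s, x ≠ v i) :
    f.eval x = (nodal s v).eval x *
      ∑ i ∈ s, f.eval (v i) / ((derivative (nodal s v)).eval (v i) * (x - v i)) := by
  conv_lhs => rw [eq_interpolate hvs hf, eval_interpolate_not_at_node _ hx]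
  congr 1
  refine sum_congr rfl fun i hi => ?_
  rw [nodalWeight_eq_eval_derivative_nodal hi]
  field_simp

theorem eq_C_coeff_mul_nodal {R ι : Type*} [CommRing R] [IsDomain R] {s : Finset ι}
    {v : ι → R} (hvs : Set.InjOn v s) {f : R[X]} (hf : f.natDegree ≤ #s)
    (hroot : ∀ i ∈ s, f.eval (v i) = 0) : f = C (f.coeff #s) * nodal s v := by
  refine eq_of_degree_sub_lt_of_eval_index_eq s hvs ?_ fun i hi => by
    simp [hroot i hi, eval_nodal_at_node hi]
  rw [degree_lt_iff_coeff_zero]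
  intro m hm
  rcases hm.eq_or_lt with rfl | hm
  · have hlead : (nodal s v).coeff #s = 1 := by
      simpa [natDegree_nodal] using (nodal_monic (s := s) (v := v)).coeff_natDegree
    simp [hlead]
  · rw [coeff_sub, coeff_C_mul, coeff_eq_zero_of_natDegree_lt (hf.trans_lt hm),
      coeff_eq_zero_of_natDegree_lt (p := nodal s v) (by rwa [natDegree_nodal]),
      mul_zero, sub_zero]

end Lagrange

section HyperExponential

open Lagrange Topology

variable {ι κ : Type*} [Fintype ι] [Fintype κ] (α w : ι → ℝ) (η c σ : ℝ)

noncomputable def hyperexpLaplace (l : ℝ) : ℝ :=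
  c * l + σ ^ 2 / 2 * l ^ 2 + η * ((∑ i, w i * α i / (l + α i)) - 1)

/-- The numerator of `hyperexpLaplace α w η c σ - s` over the common denominator
`nodal univ (-α) = ∏ⱼ (X + αⱼ)`. -/
noncomputable def hyperexpNumerator [DecidableEq ι] (s : ℝ) : ℝ[X] :=
  C (σ ^ 2 / 2) * X ^ 2 * nodal univ (-α) +
    ((C c * X - C (η + s)) * nodal univ (-α) +
      C η * ∑ j, C (w j * α j) * nodal (univ.erase j) (-α))

variable {α w η c σ} {s : ℝ} {θ : κ → ℝ}

theorem eval_nodal_neg_ne_zero {l : ℝ} (hl : ∀ j, l ≠ -α j) :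
    (nodal univ (-α)).eval l ≠ 0 :=
  eval_nodal_not_at_node fun j _ => hl j

theorem hyperexpLaplace_sub_mul_eval_nodal [DecidableEq ι] {l : ℝ} (hl : ∀ j, l ≠ -α j) :
    (hyperexpLaplace α w η c σ l - s) * (nodal univ (-α)).eval l
      = (hyperexpNumerator α w η c σ s).eval l := by
  have hsum : (∑ j, w j * α j / (l + α j)) * (nodal univ (-α)).eval l
      = ∑ j, w j * α j * (nodal (univ.erase j) (-α)).eval l := by
    rw [sum_mul]
    refine sum_congr rfl fun j _ => ?_
    have hj : l + α j ≠ 0 := fun h => hl j (by linarith)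
    rw [nodal_eq_mul_nodal_erase (mem_univ j), eval_mul]
    simp only [eval_sub, eval_X, eval_C, Pi.neg_apply, sub_neg_eq_add]
    field_simp
  simp only [hyperexpNumerator, hyperexpLaplace, eval_add, eval_mul, eval_sub, eval_C, eval_X,
    eval_pow, eval_finsetSum]
  linear_combination η * hsum

theorem natDegree_hyperexpNumerator_tail_le [DecidableEq ι] :
    ((C c * X - C (η + s)) * nodal univ (-α) +
      C η * ∑ j, C (w j * α j) * nodal (univ.erase j) (-α)).natDegree
      ≤ Fintype.card ι + 1 := by
  refine (natDegree_add_le _ _).trans (max_le ?_ ?_)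
  · refine natDegree_mul_le.trans ?_
    rw [natDegree_nodal, card_univ, add_comm]
    gcongr
    compute_degree
  · refine (natDegree_C_mul_le _ _).trans (natDegree_sum_le_of_forall_le _ _ fun j _ => ?_)
    refine (natDegree_C_mul_le _ _).trans ?_
    rw [natDegree_nodal, card_erase_of_mem (mem_univ j), card_univ]
    omega

theorem natDegree_hyperexpNumerator_le [DecidableEq ι] :
    (hyperexpNumerator α w η c σ s).natDegree ≤ Fintype.card ι + 2 := by
  refine (natDegree_add_le _ _).trans (max_le ?_ (natDegree_hyperexpNumerator_tail_le.trans
    (by omega)))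
  refine natDegree_mul_le.trans ?_
  rw [natDegree_nodal, card_univ, add_comm]
  gcongr
  exact (natDegree_C_mul_le _ _).trans (natDegree_X_pow_le 2)

theorem coeff_hyperexpNumerator [DecidableEq ι] :
    (hyperexpNumerator α w η c σ s).coeff (Fintype.card ι + 2) = σ ^ 2 / 2 := by
  have hP : (nodal univ (-α)).coeff (Fintype.card ι) = 1 := by
    simpa [natDegree_nodal] using (nodal_monic (s := univ) (v := -α)).coeff_natDegree
  rw [hyperexpNumerator, coeff_add, coeff_eq_zero_of_natDegree_lt
    (natDegree_hyperexpNumerator_tail_le.trans_lt (by omega)), mul_assoc, coeff_C_mul,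
    coeff_X_pow_mul', if_pos (by omega), Nat.add_sub_cancel, hP]
  ring

theorem hyperexpNumerator_eq_C_mul_nodal [DecidableEq ι]
    (hcard : Fintype.card κ = Fintype.card ι + 2)
    (hθ_inj : Function.Injective θ) (hθ_pole : ∀ i j, θ i ≠ -α j)
    (hθ_root : ∀ i, hyperexpLaplace α w η c σ (θ i) = s) :
    hyperexpNumerator α w η c σ s = C (σ ^ 2 / 2) * nodal univ θ := by
  have h := eq_C_coeff_mul_nodal (s := univ) hθ_inj.injOn (f := hyperexpNumerator α w η c σ s)
    (by rw [card_univ, hcard]; exact natDegree_hyperexpNumerator_le)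
    fun i _ => by rw [← hyperexpLaplace_sub_mul_eval_nodal (hθ_pole i), hθ_root i,
      sub_self, zero_mul]
  rwa [card_univ, hcard, coeff_hyperexpNumerator] at h

theorem hyperexpLaplace_sub_eq_div (hcard : Fintype.card κ = Fintype.card ι + 2)
    (hθ_inj : Function.Injective θ) (hθ_pole : ∀ i j, θ i ≠ -α j)
    (hθ_root : ∀ i, hyperexpLaplace α w η c σ (θ i) = s) {l : ℝ}
    (hl : ∀ j, l ≠ -α j) :
    hyperexpLaplace α w η c σ l - s
      = σ ^ 2 / 2 * (nodal univ θ).eval l / (nodal univ (-α)).eval l := by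
  classical
  rw [eq_div_iff (eval_nodal_neg_ne_zero hl), hyperexpLaplace_sub_mul_eval_nodal hl,
    hyperexpNumerator_eq_C_mul_nodal hcard hθ_inj hθ_pole hθ_root, eval_mul, eval_C]

theorem hasDerivAt_hyperexpLaplace_root (hcard : Fintype.card κ = Fintype.card ι + 2)
    (hθ_inj : Function.Injective θ) (hθ_pole : ∀ i j, θ i ≠ -α j)
    (hθ_root : ∀ i, hyperexpLaplace α w η c σ (θ i) = s) (i : κ) :
    HasDerivAt (hyperexpLaplace α w η c σ)
      (σ ^ 2 / 2 * (derivative (nodal univ θ)).eval (θ i) / (nodal univ (-α)).eval (θ i))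
      (θ i) := by
  have hP := eval_nodal_neg_ne_zero (hθ_pole i)
  have hnear : (fun l => σ ^ 2 / 2 * (nodal univ θ).eval l / (nodal univ (-α)).eval l + s)
      =ᶠ[𝓝 (θ i)] hyperexpLaplace α w η c σ := by
    filter_upwards [(nodal univ (-α)).continuousAt.eventually_ne hP] with l hl
    rw [← hyperexpLaplace_sub_eq_div hcard hθ_inj hθ_pole hθ_root
      fun j hj => hl (by rw [hj]; exact eval_nodal_at_node (v := -α) (mem_univ j)),
      sub_add_cancel]
  refine ((((((nodal univ θ).hasDerivAt _).const_mul (σ ^ 2 / 2)).div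
    ((nodal univ (-α)).hasDerivAt _) hP).add_const s).congr_of_eventuallyEq
    hnear.symm).congr_deriv ?_
  rw [eval_nodal_at_node (mem_univ i)]
  field_simp
  ring

theorem sub_hyperexpLaplace_mul_sum_inv_deriv (hσ : σ ≠ 0)
    (hcard : Fintype.card κ = Fintype.card ι + 2)
    (hθ_inj : Function.Injective θ) (hθ_pole : ∀ i j, θ i ≠ -α j)
    (hθ_root : ∀ i, hyperexpLaplace α w η c σ (θ i) = s) {φ : ℝ}
    (hφθ : ∀ i, φ ≠ θ i) (hφ_pole : ∀ j, φ ≠ -α j) :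
    (s - hyperexpLaplace α w η c σ φ) *
      ∑ i, 1 / ((θ i - φ) * deriv (hyperexpLaplace α w η c σ) (θ i)) = 1 := by
  classical
  have ha : σ ^ 2 / 2 ≠ 0 := by positivity
  have hterm : ∀ i, 1 / ((θ i - φ) * deriv (hyperexpLaplace α w η c σ) (θ i))
      = -(σ ^ 2 / 2)⁻¹ * ((nodal univ (-α)).eval (θ i) /
          ((derivative (nodal univ θ)).eval (θ i) * (φ - θ i))) := fun i => by
    have hP := eval_nodal_neg_ne_zero (hθ_pole i)
    have hN' : (derivative (nodal univ θ)).eval (θ i) ≠ 0 := by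
      simpa [nodalWeight_eq_eval_derivative_nodal (mem_univ i)] using
        nodalWeight_ne_zero hθ_inj.injOn (mem_univ i)
    have hφi : φ - θ i ≠ 0 := sub_ne_zero.2 (hφθ i)
    rw [(hasDerivAt_hyperexpLaplace_root hcard hθ_inj hθ_pole hθ_root i).deriv,
      ← neg_sub φ]
    field_simp
  have hpf : (nodal univ (-α)).eval φ = (nodal univ θ).eval φ *
      ∑ i, (nodal univ (-α)).eval (θ i) /
        ((derivative (nodal univ θ)).eval (θ i) * (φ - θ i)) :=
    eval_eq_eval_nodal_mul_sum hθ_inj.injOn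
      (by rw [degree_nodal, card_univ, card_univ, hcard]; exact_mod_cast (by omega))
      fun i _ => hφθ i
  have hPφ := eval_nodal_neg_ne_zero hφ_pole
  rw [sum_congr rfl fun i _ => hterm i, ← mul_sum, ← neg_sub,
    hyperexpLaplace_sub_eq_div hcard hθ_inj hθ_pole hθ_root hφ_pole, hpf]
  rw [hpf] at hPφ
  have hN : (nodal univ θ).eval φ ≠ 0 := left_ne_zero_of_mul hPφ
  have hsum := right_ne_zero_of_mul hPφ
  field_simp

end HyperExponential

theorem integral_exp_mul (a b c : ℝ) (hc : c ≠ 0) :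
    ∫ z in a..b, Real.exp (c * z) = (Real.exp (c * b) - Real.exp (c * a)) / c := by
  rw [intervalIntegral.integral_comp_mul_left (fun z => Real.exp z) hc, integral_exp, smul_eq_mul,
    inv_mul_eq_div]

theorem exp_mul_one_add_integral_exp_sum {κ : Type*} [Fintype κ] (θ d : κ → ℝ) {φ q : ℝ}
    (hφθ : ∀ i, φ ≠ θ i) (hq : q * ∑ i, 1 / ((θ i - φ) * d i) = 1) (x : ℝ) :
    Real.exp (φ * x) *
        (1 + q * ∫ z in (0:ℝ)..x, Real.exp (-(φ * z)) * ∑ i, Real.exp (θ i * z) / d i)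
      = q * ∑ i, Real.exp (θ i * x) / ((θ i - φ) * d i) := by
  have hshift : ∀ i z, Real.exp (θ i * z) = Real.exp (φ * z) * Real.exp ((θ i - φ) * z) :=
    fun i z => by rw [← Real.exp_add]; ring_nf
  have hint : ∫ z in (0:ℝ)..x, Real.exp (-(φ * z)) * ∑ i, Real.exp (θ i * z) / d i
      = ∑ i, (Real.exp ((θ i - φ) * x) - 1) / ((θ i - φ) * d i) := by
    have hintegrand : ∀ z, Real.exp (-(φ * z)) * ∑ i, Real.exp (θ i * z) / d i
        = ∑ i, Real.exp ((θ i - φ) * z) / d i := fun z => by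
      rw [mul_sum]
      refine sum_congr rfl fun i _ => ?_
      rw [hshift, mul_div_assoc', ← mul_assoc, ← Real.exp_add, neg_add_cancel, Real.exp_zero,
        one_mul]
    simp_rw [hintegrand]
    rw [intervalIntegral.integral_finsetSum fun i _ =>
      (by fun_prop : Continuous _).intervalIntegrable _ _]
    refine sum_congr rfl fun i _ => ?_
    rw [intervalIntegral.integral_div, integral_exp_mul _ _ _ (sub_ne_zero.2 (hφθ i).symm),
      mul_zero, Real.exp_zero, div_div]
  simp_rw [hint, hshift, sub_div, sum_sub_distrib, mul_div_assoc, ← mul_sum]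
  linear_combination -Real.exp (φ * x) * hq

theorem hyperexp_H_function_general
    (n : ℕ)
    (α w : Fin n → ℝ)
    (η : ℝ) (c σ : ℝ) (hσ : 0 < σ)
    (ψ : ℝ → ℝ)
    (hψ : ∀ l : ℝ, ψ l
      = c * l + σ ^ 2 / 2 * l ^ 2 + η * ((∑ i, w i * α i / (l + α i)) - 1))
    (p q : ℝ)
    (θ : Fin (n + 2) → ℝ) (hθ_inj : Function.Injective θ)
    (hθ_pole : ∀ i j, θ i ≠ -α j)
    (hθ_root : ∀ i, ψ (θ i) = p + q)
    (φ : ℝ) (hφθ : ∀ i, φ ≠ θ i) (hφ_pole : ∀ j, φ ≠ -α j)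
    (hφ_root : ψ φ = p) :
    ∀ x : ℝ, 0 ≤ x →
      Real.exp (φ * x) *
          (1 + q * ∫ z in (0:ℝ)..x,
            Real.exp (-(φ * z)) * ∑ i, Real.exp (θ i * z) / deriv ψ (θ i))
        = q * ∑ i, Real.exp (θ i * x) / ((θ i - φ) * deriv ψ (θ i)) := by
  obtain rfl : ψ = hyperexpLaplace α w η c σ := funext hψ
  intro x _
  have hsum := sub_hyperexpLaplace_mul_sum_inv_deriv hσ.ne' (by simp) hθ_inj hθ_pole
    hθ_root hφθ hφ_pole
  rw [hφ_root, add_sub_cancel_left] at hsum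
  exact exp_mul_one_add_integral_exp_sum θ _ hφθ hsum x

/-- Equation (4.5) of the paper: for the hyper-exponential jump-diffusion,
𝓗^{(p,q)}(x) = e^{Φ(p)x}(1 + q∫₀ˣ e^{−Φ(p)z}W^{(p+q)}(z)dz)
             = q ∑ᵢ e^{θᵢx}/((θᵢ − Φ(p))ψ′(θᵢ)) for x ≥ 0,
where the θᵢ are the roots of ψ = p + q and Φ(p) is a root of ψ = p. -/
theorem hyperexp_H_function
    (n : ℕ) (hn : 1 ≤ n)
    (α w : Fin n → ℝ)
    (hα_pos : ∀ i, 0 < α i) (hα_mono : StrictMono α)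
    (hw_pos : ∀ i, 0 < w i) (hw_sum : ∑ i, w i = 1)
    (η : ℝ) (hη : 0 < η) (c σ : ℝ) (hσ : 0 < σ)
    (ψ : ℝ → ℝ)
    (hψ : ∀ l : ℝ, ψ l
      = c * l + σ ^ 2 / 2 * l ^ 2 + η * ((∑ i, w i * α i / (l + α i)) - 1))
    (p q : ℝ) (hp : 0 < p) (hq : 0 < q)
    (θ : Fin (n + 2) → ℝ) (hθ_inj : Function.Injective θ)
    (hθ_pole : ∀ i j, θ i ≠ -α j)
    (hθ_root : ∀ i, ψ (θ i) = p + q)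
    (hθ_simple : ∀ i, deriv ψ (θ i) ≠ 0)
    (φ : ℝ) (hφθ : ∀ i, φ ≠ θ i) (hφ_pole : ∀ j, φ ≠ -α j)
    (hφ_root : ψ φ = p) :
    ∀ x : ℝ, 0 ≤ x →
      Real.exp (φ * x) *
          (1 + q * ∫ z in (0:ℝ)..x,
            Real.exp (-(φ * z)) * ∑ i, Real.exp (θ i * z) / deriv ψ (θ i))
        = q * ∑ i, Real.exp (θ i * x) / ((θ i - φ) * deriv ψ (θ i)) :=
  hyperexp_H_function_general n α w η c σ hσ ψ hψ p q θ hθ_inj hθ_pole hθ_root φ hφθ hφ_pole hφ_root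
end
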